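/- arXiv:math/0603410 — 5 statements merged into one kernel-verified Lean document; each statement's English description precedes it below -/
import Mathlib

section
/- Let p : ℝ^n → ℝ be a positive hyperbolic polynomial of degree m ≥ 1. Then the coefficient of every monomial of p is nonnegative. -/
/-- The univariate polynomial `t ↦ p(x + t u)`. -/
noncomputable def lineRestrict {n : ℕ} (p : MvPolynomial (Fin n) ℝ) (x u : Fin n → ℝ) :
    Polynomial ℝ :=
  MvPolynomial.aeval (fun i => Polynomial.C (x i) + Polynomial.C (u i) * Polynomial.X) p

/-- `p` is positive hyperbolic of degree `m`. -/
def PosHyperbolic {n : ℕ} (p : MvPolynomial (Fin n) ℝ) (m : ℕ) : Prop :=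
  p.IsHomogeneous m ∧
  (∀ x : Fin n → ℝ, (∀ i, 0 < x i) → 0 < MvPolynomial.eval x p) ∧
  ∀ u x : Fin n → ℝ, (∀ i, 0 < u i) → ((lineRestrict p x u).roots).card = m

open Polynomial

variable {n : ℕ}

/-- coeff of a product at the sum of degree bounds. -/
theorem coeff_prod_top {R : Type*} [CommSemiring R] {ι : Type*} (s : Finset ι) (f : ι → R[X])
    (e : ι → ℕ) (h : ∀ i ∈ s, (f i).natDegree ≤ e i) :
    (∏ i ∈ s, f i).coeff (∑ i ∈ s, e i) = ∏ i ∈ s, (f i).coeff (e i) := by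
  classical
  induction s using Finset.cons_induction with
  | empty => simp
  | cons a s ha ih =>
      rw [Finset.prod_cons, Finset.sum_cons, coeff_mul_add_eq_of_natDegree_le (h a (Finset.mem_cons_self a s))
        ((natDegree_prod_le _ _).trans (Finset.sum_le_sum fun i hi => h i (Finset.mem_cons_of_mem hi))),
        Finset.prod_cons, ih fun i hi => h i (Finset.mem_cons_of_mem hi)]

theorem natDegree_linfac_le {S : Type*} [CommRing S] (a b : S) :
    (C a + C b * X : S[X]).natDegree ≤ 1 :=
by
  refine (natDegree_add_le _ _).trans (max_le ?_ ?_)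
  · simp
  · exact (natDegree_C_mul_le _ _).trans natDegree_X_le

theorem coeff_one_linfac {S : Type*} [CommRing S] (a b : S) :
    (C a + C b * X : S[X]).coeff 1 = b := by
  rw [coeff_add, coeff_C_mul, coeff_X_one, coeff_C, if_neg one_ne_zero, zero_add, mul_one]

/-- `natDegree` of the line restriction of a monomial. -/
theorem natDegree_line_monomial_le {R S : Type*} [CommRing R] [CommRing S] [Algebra R S]
    (x u : Fin n → S) (d : Fin n →₀ ℕ) (c : R) :
    ((MvPolynomial.aeval (fun i => C (x i) + C (u i) * X)) (MvPolynomial.monomial d c) : S[X]).natDegree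
      ≤ d.degree := by
  rw [MvPolynomial.aeval_monomial]
  refine (natDegree_mul_le).trans ?_
  have h1 : (algebraMap R S[X] c).natDegree = 0 := by
    rw [show algebraMap R S[X] c = C (algebraMap R S c) from rfl, natDegree_C]
  rw [h1, zero_add]
  refine (natDegree_prod_le _ _).trans ?_
  rw [Finsupp.degree]
  refine Finset.sum_le_sum fun i hi => ?_
  exact (natDegree_pow_le).trans (by
    calc d i * (C (x i) + C (u i) * X).natDegree ≤ d i * 1 :=
          Nat.mul_le_mul_left _ (natDegree_linfac_le _ _)
      _ = d i := mul_one _)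

theorem coeff_line_monomial_top {R S : Type*} [CommRing R] [CommRing S] [Algebra R S]
    (x u : Fin n → S) (d : Fin n →₀ ℕ) (c : R) :
    ((MvPolynomial.aeval (fun i => C (x i) + C (u i) * X)) (MvPolynomial.monomial d c) : S[X]).coeff
        d.degree
      = algebraMap R S c * ∏ i ∈ d.support, u i ^ d i := by
  rw [MvPolynomial.aeval_monomial]
  rw [show algebraMap R S[X] c = C (algebraMap R S c) from rfl, coeff_C_mul]
  congr 1
  have : (d.prod fun i k => (C (x i) + C (u i) * X) ^ k)
      = ∏ i ∈ d.support, (C (x i) + C (u i) * X) ^ d i := rfl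
  rw [this, Finsupp.degree_apply,
    coeff_prod_top d.support _ (fun i => d i)
      (fun i _ => natDegree_pow_le.trans (by
        calc d i * (C (x i) + C (u i) * X).natDegree ≤ d i * 1 :=
              Nat.mul_le_mul_left _ (natDegree_linfac_le _ _)
          _ = d i := mul_one _))]
  refine Finset.prod_congr rfl fun i _ => ?_
  have := coeff_pow_of_natDegree_le (p := C (x i) + C (u i) * X) (n := 1) (m := d i)
    (natDegree_linfac_le _ _)
  rw [mul_one] at this
  rw [this, coeff_one_linfac]

/-- natDegree of the line restriction of a homogeneous polynomial. -/
theorem natDegree_line_le {R S : Type*} [CommRing R] [CommRing S] [Algebra R S]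
    (x u : Fin n → S) {q : MvPolynomial (Fin n) R} {m : ℕ} (hq : q.IsHomogeneous m) :
    ((MvPolynomial.aeval (fun i => C (x i) + C (u i) * X)) q : S[X]).natDegree ≤ m := by
  conv_lhs => rw [q.as_sum]
  rw [map_sum]
  refine natDegree_sum_le_of_forall_le _ _ fun d hd => ?_
  refine (natDegree_line_monomial_le x u d _).trans ?_
  have : d.degree = m := by
    by_contra h
    exact (MvPolynomial.mem_support_iff.mp hd) (hq.coeff_eq_zero h)
  omega

/-- top coefficient of the line restriction of a homogeneous polynomial. -/
theorem coeff_line_top {R S : Type*} [CommRing R] [CommRing S] [Algebra R S]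
    (x u : Fin n → S) {q : MvPolynomial (Fin n) R} {m : ℕ} (hq : q.IsHomogeneous m) :
    ((MvPolynomial.aeval (fun i => C (x i) + C (u i) * X)) q : S[X]).coeff m
      = (MvPolynomial.aeval u) q := by
  conv_lhs => rw [q.as_sum]
  rw [map_sum, finset_sum_coeff]
  have hs : ∀ d ∈ q.support, d.degree = m := fun d hd => by
    by_contra h
    exact (MvPolynomial.mem_support_iff.mp hd) (hq.coeff_eq_zero h)
  rw [show ((MvPolynomial.aeval u) q : S) = ∑ d ∈ q.support,
      algebraMap R S (q.coeff d) * ∏ i ∈ d.support, u i ^ d i by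
    conv_lhs => rw [q.as_sum]
    rw [map_sum]
    exact Finset.sum_congr rfl fun d _ => by rw [MvPolynomial.aeval_monomial]; rfl]
  refine Finset.sum_congr rfl fun d hd => ?_
  rw [← hs d hd, coeff_line_monomial_top]

/-- Evaluating the line restriction at `t`. -/
theorem eval_line {R S : Type*} [CommRing R] [CommRing S] [Algebra R S]
    (x u : Fin n → S) (t : S) (q : MvPolynomial (Fin n) R) :
    ((MvPolynomial.aeval (fun i => C (x i) + C (u i) * X)) q : S[X]).eval t
      = (MvPolynomial.aeval (fun i => x i + u i * t)) q := by
  induction q using MvPolynomial.induction_on with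
  | C a => simp [MvPolynomial.algebraMap_eq]
  | add p q hp hq => simp [hp, hq]
  | mul_X p i hp => simp [hp]

noncomputable def Dop {R : Type*} [CommRing R] (u : Fin n → R) (q : MvPolynomial (Fin n) R) :
    MvPolynomial (Fin n) R :=
  ∑ i, MvPolynomial.C (u i) * MvPolynomial.pderiv i q

/-- Chain rule for the line restriction. -/
theorem derivative_line {R S : Type*} [CommRing R] [CommRing S] [Algebra R S]
    (x u : Fin n → S) (q : MvPolynomial (Fin n) R) :
    derivative ((MvPolynomial.aeval (fun i => C (x i) + C (u i) * X)) q : S[X])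
      = ∑ i, C (u i) *
          ((MvPolynomial.aeval (fun i => C (x i) + C (u i) * X)) (MvPolynomial.pderiv i q) : S[X]) := by
  induction q using MvPolynomial.induction_on with
  | C a => simp
  | add p q hp hq =>
      simp only [map_add, derivative_add, hp, hq, mul_add, Finset.sum_add_distrib]
  | mul_X p i hp =>
      classical
      have hline : (MvPolynomial.aeval fun i => C (x i) + C (u i) * X) (p * MvPolynomial.X i)
          = (MvPolynomial.aeval fun i => C (x i) + C (u i) * X) p * (C (x i) + C (u i) * X) := by
        simp
      have hpd : ∀ j : Fin n, MvPolynomial.pderiv j (p * MvPolynomial.X i)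
          = MvPolynomial.pderiv j p * MvPolynomial.X i + if j = i then p else 0 := by
        intro j
        rw [MvPolynomial.pderiv_mul, MvPolynomial.pderiv_X]
        by_cases h : j = i <;> simp [h, Pi.single_apply]
      have hderivL : derivative (C (x i) + C (u i) * X : S[X]) = C (u i) := by simp
      have key : ∀ j : Fin n,
          C (u j) * (MvPolynomial.aeval fun i => C (x i) + C (u i) * X)
              (MvPolynomial.pderiv j (p * MvPolynomial.X i))
          = C (u j) * ((MvPolynomial.aeval fun i => C (x i) + C (u i) * X)
                (MvPolynomial.pderiv j p) * (C (x i) + C (u i) * X))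
            + if j = i then
                C (u j) * (MvPolynomial.aeval fun i => C (x i) + C (u i) * X) p else 0 := by
        intro j
        rw [hpd j]
        by_cases h : j = i <;> simp [h, mul_add]
      rw [hline, derivative_mul, hp, hderivL,
        Finset.sum_congr rfl (fun j (_ : j ∈ Finset.univ) => key j), Finset.sum_add_distrib,
        Finset.sum_ite_eq' Finset.univ i, Finset.sum_mul]
      simp only [Finset.mem_univ, if_true]
      refine congrArg₂ (· + ·) ?_ ?_
      · exact Finset.sum_congr rfl fun j _ => mul_assoc _ _ _
      · exact mul_comm _ _

theorem coeff_pderiv {R : Type*} [CommRing R] (i : Fin n) (q : MvPolynomial (Fin n) R)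
    (c : Fin n →₀ ℕ) :
    MvPolynomial.coeff c (MvPolynomial.pderiv i q)
      = (c i + 1) * MvPolynomial.coeff (c + Finsupp.single i 1) q := by
  classical
  induction q using MvPolynomial.induction_on' with
  | monomial d a =>
      rw [MvPolynomial.pderiv_monomial, MvPolynomial.coeff_monomial, MvPolynomial.coeff_monomial]
      by_cases h : d = c + Finsupp.single i 1
      · subst h
        rw [if_pos (add_tsub_cancel_right _ _), if_pos rfl]
        simp only [Finsupp.add_apply, Finsupp.single_eq_same]
        push_cast
        ring
      · rw [if_neg h, mul_zero]
        by_cases h2 : d - Finsupp.single i 1 = c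
        · rw [if_pos h2]
          have hpt : ∀ j, d j - (Finsupp.single i 1 : Fin n →₀ ℕ) j = c j := fun j => by
            rw [← Finsupp.tsub_apply, h2]
          have hdi : d i = 0 := by
            by_contra hdi
            apply h
            ext j
            rw [Finsupp.add_apply]
            by_cases hj : j = i
            · subst hj
              have := hpt j
              rw [Finsupp.single_eq_same] at this ⊢
              omega
            · have := hpt j
              rw [Finsupp.single_eq_of_ne hj] at this ⊢
              omega
          rw [hdi]
          push_cast
          ring
        · rw [if_neg h2]
  | add p q hp hq => simp only [map_add, MvPolynomial.coeff_add, hp, hq]; ring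

theorem IsHomogeneous.pderiv' {R : Type*} [CommRing R] {q : MvPolynomial (Fin n) R} {m : ℕ}
    (hq : q.IsHomogeneous (m + 1)) (i : Fin n) :
    (MvPolynomial.pderiv i q).IsHomogeneous m := by
  intro d hd
  have hd' : MvPolynomial.coeff d (MvPolynomial.pderiv i q) ≠ 0 := hd
  rw [coeff_pderiv] at hd'
  have h2 : MvPolynomial.coeff (d + Finsupp.single i 1) q ≠ 0 := by
    intro h
    rw [h, mul_zero] at hd'
    exact hd' rfl
  have h3 := hq h2
  have h4 : ((Finsupp.weight 1) (Finsupp.single i (1 : ℕ)) : ℕ) = 1 := by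
    simp [Finsupp.weight_apply]
  have h5 := map_add (Finsupp.weight (1 : Fin n → ℕ)) d (Finsupp.single i 1)
  rw [h5, h4] at h3
  omega

/-- A real polynomial all of whose complex roots are real has a full set of real roots. -/
theorem real_roots_card {f : Polynomial ℝ} (hf : f ≠ 0)
    (h : ∀ z : ℂ, Polynomial.aeval z f = 0 → z.im = 0) :
    f.roots.card = f.natDegree := by
  classical
  set φ := algebraMap ℝ ℂ with hφ
  have hinj : Function.Injective φ := (algebraMap ℝ ℂ).injective
  have hF : f.map φ ≠ 0 := (Polynomial.map_ne_zero_iff hinj).mpr hf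
  have hsplit : (f.map φ).roots.card = (f.map φ).natDegree :=
    splits_iff_card_roots.mp (IsAlgClosed.splits (f.map φ))
  have hle : f.roots.map φ ≤ (f.map φ).roots := Polynomial.map_roots_le hF
  have hge : (f.map φ).roots ≤ f.roots.map φ := by
    rw [Multiset.le_iff_count]
    intro z
    by_cases hz : z ∈ (f.map φ).roots
    · have hroot : Polynomial.aeval z f = 0 := by
        have := (Polynomial.isRoot_of_mem_roots hz)
        rwa [Polynomial.IsRoot, Polynomial.eval_map, ← Polynomial.aeval_def] at this
      have him : z.im = 0 := h z hroot
      have hzre : z = φ z.re := by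
        rw [hφ]
        exact (Complex.ext (by simp) (by simp [him])).symm
      rw [hzre, Multiset.count_map_eq_count' φ _ hinj, Polynomial.count_roots,
        Polynomial.count_roots, ← Polynomial.eq_rootMultiplicity_map hinj]
    · rw [Multiset.count_eq_zero_of_notMem hz]
      exact Nat.zero_le _
  have heq : (f.map φ).roots = f.roots.map φ := le_antisymm hge hle
  have := hsplit
  rw [heq, Multiset.card_map, Polynomial.natDegree_map_eq_of_injective hinj] at this
  exact this

/-- evaluation at zero of a product of linear factors. -/
theorem eval_zero_prod_linear {K : Type*} [Field K] (S : Multiset K) :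
    Polynomial.eval 0 ((S.map fun a => X - C a).prod) = (S.map fun a => -a).prod := by
  rw [Polynomial.eval_multiset_prod]
  rw [Multiset.map_map]
  congr 1
  exact Multiset.map_congr rfl fun a _ => by simp

/-- evaluation at zero of the derivative of a product of linear factors. -/
theorem eval_zero_derivative_prod {K : Type*} [Field K] (S : Multiset K) (h0 : (0 : K) ∉ S) :
    Polynomial.eval 0 (derivative (S.map fun a => X - C a).prod)
      = (S.map fun a => -a).prod * (S.map fun a => (-a)⁻¹).sum := by
  classical
  induction S using Multiset.induction with
  | empty => simp
  | cons a T ih =>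
      have ha : a ≠ 0 := fun h => h0 (h ▸ Multiset.mem_cons_self a T)
      have h0T : (0 : K) ∉ T := fun h => h0 (Multiset.mem_cons_of_mem h)
      have hd1 : derivative (X - C a : K[X]) = 1 := by simp
      rw [Multiset.map_cons, Multiset.prod_cons, derivative_mul, hd1, one_mul]
      rw [Polynomial.eval_add, Polynomial.eval_mul, ih h0T, eval_zero_prod_linear]
      have he : Polynomial.eval 0 (X - C a : K[X]) = -a := by simp
      rw [he, Multiset.map_cons, Multiset.prod_cons, Multiset.map_cons, Multiset.sum_cons]
      have hna : (-a) * (-a)⁻¹ = 1 := mul_inv_cancel₀ (neg_ne_zero.mpr ha)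
      have hring : (-a) * (Multiset.map (fun a => -a) T).prod
            * ((-a)⁻¹ + (Multiset.map (fun a => (-a)⁻¹) T).sum)
          = ((-a) * (-a)⁻¹) * (Multiset.map (fun a => -a) T).prod
            + (-a) * ((Multiset.map (fun a => -a) T).prod
                * (Multiset.map (fun a => (-a)⁻¹) T).sum) := by ring
      rw [hring, hna, one_mul]

theorem multiset_sum_im_neg (S : Multiset ℂ) (hS : S ≠ 0) (h : ∀ a ∈ S, a.im < 0) :
    S.sum.im < 0 := by
  induction S using Multiset.induction with
  | empty => exact absurd rfl hS
  | cons a T ih =>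
      rw [Multiset.sum_cons, Complex.add_im]
      rcases eq_or_ne T 0 with rfl | hT
      · simpa using h a (Multiset.mem_cons_self _ _)
      · have h1 := h a (Multiset.mem_cons_self a T)
        have h2 := ih hT fun b hb => h b (Multiset.mem_cons_of_mem hb)
        linarith

theorem multiset_prod_pos (S : Multiset ℝ) (h : ∀ a ∈ S, 0 < a) : 0 < S.prod := by
  induction S using Multiset.induction with
  | empty => simp
  | cons a T ih =>
      rw [Multiset.prod_cons]
      exact mul_pos (h a (Multiset.mem_cons_self a T))
        (ih fun b hb => h b (Multiset.mem_cons_of_mem hb))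

theorem multiset_sum_pos (S : Multiset ℝ) (hS : S ≠ 0) (h : ∀ a ∈ S, 0 < a) : 0 < S.sum := by
  induction S using Multiset.induction with
  | empty => exact absurd rfl hS
  | cons a T ih =>
      rw [Multiset.sum_cons]
      rcases eq_or_ne T 0 with rfl | hT
      · simpa using h a (Multiset.mem_cons_self _ _)
      · have h1 := h a (Multiset.mem_cons_self a T)
        have h2 := ih hT fun b hb => h b (Multiset.mem_cons_of_mem hb)
        linarith

theorem eval_zero_derivative_ne_zero {c : ℂ} (hc : c ≠ 0) (S : Multiset ℂ) (hS : S ≠ 0)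
    (him : ∀ a ∈ S, a.im < 0) :
    Polynomial.eval 0 (derivative (C c * (S.map fun a => X - C a).prod)) ≠ 0 := by
  have hmem : ∀ a ∈ S, a ≠ 0 := fun a ha h0 => by
    have := him a ha; rw [h0] at this; simp at this
  have h0S : (0 : ℂ) ∉ S := fun h => (hmem 0 h) rfl
  rw [derivative_C_mul, Polynomial.eval_mul, Polynomial.eval_C,
    eval_zero_derivative_prod S h0S]
  refine mul_ne_zero hc (mul_ne_zero ?_ ?_)
  · refine Multiset.prod_ne_zero ?_
    intro hmm
    rcases Multiset.mem_map.mp hmm with ⟨a, ha, ha0⟩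
    exact hmem a ha (neg_eq_zero.mp ha0)
  · intro hsum
    have : ((S.map fun a => (-a)⁻¹).sum).im < 0 := by
      refine multiset_sum_im_neg _ (by simpa using hS) ?_
      intro b hb
      rcases Multiset.mem_map.mp hb with ⟨a, ha, rfl⟩
      rw [Complex.inv_im, Complex.neg_im]
      have hn0 : Complex.normSq (-a) > 0 := Complex.normSq_pos.mpr (neg_ne_zero.mpr (hmem a ha))
      have : a.im < 0 := him a ha
      rw [neg_neg]
      exact div_neg_of_neg_of_pos this hn0
    rw [hsum] at this
    simp at this

theorem eval_zero_derivative_pos {c : ℝ} (hc : 0 < c) (S : Multiset ℝ) (hS : S ≠ 0)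
    (hneg : ∀ a ∈ S, a < 0) :
    0 < Polynomial.eval 0 (derivative (C c * (S.map fun a => X - C a).prod)) := by
  have h0S : (0 : ℝ) ∉ S := fun h => absurd (hneg 0 h) (lt_irrefl 0)
  rw [derivative_C_mul, Polynomial.eval_mul, Polynomial.eval_C,
    eval_zero_derivative_prod S h0S]
  refine mul_pos hc (mul_pos ?_ ?_)
  · refine multiset_prod_pos _ ?_
    intro b hb
    rcases Multiset.mem_map.mp hb with ⟨a, ha, rfl⟩
    linarith [hneg a ha]
  · refine multiset_sum_pos _ (by simpa using hS) ?_
    intro b hb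
    rcases Multiset.mem_map.mp hb with ⟨a, ha, rfl⟩
    have := hneg a ha
    exact inv_pos.mpr (by linarith)

theorem aeval_self_eq_eval (g : Fin n → ℝ) (q : MvPolynomial (Fin n) ℝ) :
    MvPolynomial.aeval g q = MvPolynomial.eval g q := by
  rw [MvPolynomial.aeval_def, ← MvPolynomial.eval₂_id (g := g) q]
  congr 1

theorem aeval_line_complex (x u : Fin n → ℝ) (t : ℂ) (q : MvPolynomial (Fin n) ℝ) :
    Polynomial.aeval t
        ((MvPolynomial.aeval (fun i => (C (x i) + C (u i) * X : Polynomial ℝ))) q)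
      = MvPolynomial.aeval (fun i => (x i : ℂ) + (u i : ℂ) * t) q := by
  induction q using MvPolynomial.induction_on with
  | C a => simp [MvPolynomial.algebraMap_eq]
  | add p q hp hq => simp [hp, hq]
  | mul_X p i hp => simp [hp]

/-- basic data about the line restriction of a positive hyperbolic polynomial. -/
theorem line_data {m : ℕ} (hm : 1 ≤ m) {p : MvPolynomial (Fin n) ℝ} (hp : PosHyperbolic p m)
    {u : Fin n → ℝ} (hu : ∀ i, 0 < u i) (x : Fin n → ℝ) :
    (lineRestrict p x u).natDegree = m ∧ lineRestrict p x u ≠ 0 ∧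
      (lineRestrict p x u) =
        C ((lineRestrict p x u).leadingCoeff) *
          ((lineRestrict p x u).roots.map fun a => X - C a).prod ∧
      (lineRestrict p x u).leadingCoeff = MvPolynomial.eval u p ∧
      (lineRestrict p x u).roots.card = m := by
  have hcard := hp.2.2 u x hu
  set f := lineRestrict p x u with hf
  have hdeg : f.natDegree ≤ m := natDegree_line_le x u hp.1
  have hdegeq : f.natDegree = m :=
    le_antisymm hdeg (by rw [← hcard]; exact Polynomial.card_roots' f)
  have hf0 : f ≠ 0 := by
    intro h
    rw [h] at hcard
    simp only [Polynomial.roots_zero, Multiset.card_zero] at hcard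
    omega
  have hsplits : f.Splits :=
    splits_iff_card_roots.mpr (by rw [hcard, hdegeq])
  refine ⟨hdegeq, hf0, hsplits.eq_prod_roots, ?_, hcard⟩
  rw [Polynomial.leadingCoeff, hdegeq, hf]
  rw [show lineRestrict p x u
      = (MvPolynomial.aeval (fun i => (C (x i) + C (u i) * X : Polynomial ℝ))) p from rfl,
    coeff_line_top x u hp.1, aeval_self_eq_eval]

/-- positive hyperbolic polynomials are stable. -/
theorem stab {m : ℕ} (hm : 1 ≤ m) {p : MvPolynomial (Fin n) ℝ} (hp : PosHyperbolic p m) :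
    ∀ z : Fin n → ℂ, (∀ i, 0 < (z i).im) → MvPolynomial.aeval z p ≠ 0 := by
  intro z hz
  set x : Fin n → ℝ := fun i => (z i).re with hx
  set y : Fin n → ℝ := fun i => (z i).im with hy
  obtain ⟨hdegeq, hf0, hprod, hlead, hcard⟩ := line_data hm hp (u := y) hz x
  have hzeq : z = fun i => ((x i : ℂ) + (y i : ℂ) * Complex.I) := by
    funext i
    rw [hx, hy]
    exact (Complex.re_add_im (z i)).symm
  have hcomp : MvPolynomial.aeval z p = Polynomial.aeval Complex.I (lineRestrict p x y) := by
    rw [show lineRestrict p x y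
        = (MvPolynomial.aeval (fun i => (C (x i) + C (y i) * X : Polynomial ℝ))) p from rfl,
      aeval_line_complex, hzeq]
  rw [hcomp, hprod, map_mul, Polynomial.aeval_C]
  refine mul_ne_zero ?_ ?_
  · have h1 : (lineRestrict p x y).leadingCoeff ≠ 0 := Polynomial.leadingCoeff_ne_zero.mpr hf0
    simpa using h1
  · rw [map_multiset_prod, Multiset.map_map]
    refine Multiset.prod_ne_zero ?_
    intro h0
    rcases Multiset.mem_map.mp h0 with ⟨r, hr, hr0⟩
    have heval : Polynomial.aeval Complex.I ((X : Polynomial ℝ) - C r) = Complex.I - (r : ℂ) := by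
      simp
    rw [Function.comp_apply, heval] at hr0
    have him := congrArg Complex.im hr0
    simp [Complex.sub_im, Complex.I_im] at him

theorem eval_Dop_eq (u x : Fin n → ℝ) (p : MvPolynomial (Fin n) ℝ) :
    Polynomial.eval 0 (derivative (lineRestrict p x u)) = MvPolynomial.eval x (Dop u p) := by
  rw [show lineRestrict p x u
      = (MvPolynomial.aeval fun i => (C (x i) + C (u i) * X : Polynomial ℝ)) p from rfl,
    derivative_line, Polynomial.eval_finset_sum, Dop, map_sum]
  refine Finset.sum_congr rfl fun i _ => ?_
  have harg : (fun j => x j + u j * 0) = x := by funext j; ring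
  rw [Polynomial.eval_mul, Polynomial.eval_C, eval_line, harg, map_mul, MvPolynomial.eval_C,
    aeval_self_eq_eval]

theorem deriv_pos {m : ℕ} (hm : 1 ≤ m) {p : MvPolynomial (Fin n) ℝ} (hp : PosHyperbolic p m)
    {u x : Fin n → ℝ} (hu : ∀ i, 0 < u i) (hx : ∀ i, 0 < x i) :
    0 < MvPolynomial.eval x (Dop u p) := by
  obtain ⟨hdegeq, hf0, hprod, hlead, hcard⟩ := line_data hm hp hu x
  have hrootsneg : ∀ r ∈ (lineRestrict p x u).roots, r < 0 := by
    intro r hr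
    by_contra hrge
    push_neg at hrge
    have hroot := Polynomial.isRoot_of_mem_roots hr
    rw [Polynomial.IsRoot] at hroot
    have heq : Polynomial.eval r (lineRestrict p x u)
        = MvPolynomial.eval (fun i => x i + u i * r) p := by
      rw [show lineRestrict p x u
          = (MvPolynomial.aeval fun i => (C (x i) + C (u i) * X : Polynomial ℝ)) p from rfl,
        eval_line, aeval_self_eq_eval]
    have hpos := hp.2.1 (fun i => x i + u i * r) (fun i => by
      have h1 := mul_nonneg (hu i).le hrge
      show 0 < x i + u i * r
      linarith [hx i])
    rw [heq] at hroot
    linarith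
  rw [← eval_Dop_eq]
  have hSne : (lineRestrict p x u).roots ≠ 0 := by
    intro h
    rw [h] at hcard
    simp only [Multiset.card_zero] at hcard
    omega
  have hcpos : 0 < (lineRestrict p x u).leadingCoeff := by
    rw [hlead]; exact hp.2.1 u hu
  conv_rhs => rw [hprod]
  exact eval_zero_derivative_pos hcpos _ hSne hrootsneg

theorem aeval_coe_ofReal (u : Fin n → ℝ) (q : MvPolynomial (Fin n) ℝ) :
    MvPolynomial.aeval (fun i => ((u i : ℝ) : ℂ)) q = ((MvPolynomial.eval u q : ℝ) : ℂ) := by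
  induction q using MvPolynomial.induction_on with
  | C a => simp [MvPolynomial.algebraMap_eq]
  | add p q hp hq => simp [hp, hq]
  | mul_X p i hp => simp [hp]

theorem Dop_isHomogeneous {R : Type*} [CommRing R] {q : MvPolynomial (Fin n) R} {k : ℕ}
    (hq : q.IsHomogeneous (k + 1)) (u : Fin n → R) : (Dop u q).IsHomogeneous k := by
  rw [Dop, ← MvPolynomial.mem_homogeneousSubmodule]
  refine Submodule.sum_mem _ fun i _ => ?_
  rw [MvPolynomial.mem_homogeneousSubmodule]
  exact MvPolynomial.IsHomogeneous.C_mul (IsHomogeneous.pderiv' hq i) (u i)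

theorem deriv_stab {m : ℕ} (hm : 1 ≤ m) {p : MvPolynomial (Fin n) ℝ} (hp : PosHyperbolic p m)
    {u : Fin n → ℝ} (hu : ∀ i, 0 < u i) :
    ∀ z : Fin n → ℂ, (∀ i, 0 < (z i).im) → MvPolynomial.aeval z (Dop u p) ≠ 0 := by
  intro z hz
  set s : Fin n → Polynomial ℂ := fun i => C (z i) + C ((u i : ℂ)) * X with hs
  set g := (MvPolynomial.aeval s) p with hg
  have hdeg : g.natDegree ≤ m := natDegree_line_le z (fun i => (u i : ℂ)) hp.1
  have hcoeff : g.coeff m = MvPolynomial.aeval (fun i => ((u i : ℝ) : ℂ)) p :=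
    coeff_line_top z (fun i => (u i : ℂ)) hp.1
  have hgm : g.coeff m ≠ 0 := by
    rw [hcoeff, aeval_coe_ofReal]
    exact_mod_cast ne_of_gt (hp.2.1 u hu)
  have hdegeq : g.natDegree = m := le_antisymm hdeg (Polynomial.le_natDegree_of_ne_zero hgm)
  have hg0 : g ≠ 0 := fun h => hgm (by simp [h])
  have hlead : g.leadingCoeff ≠ 0 := Polynomial.leadingCoeff_ne_zero.mpr hg0
  have hsplits : Splits g := IsAlgClosed.splits g
  have hprod := hsplits.eq_prod_roots
  have hrootsim : ∀ w ∈ g.roots, w.im < 0 := by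
    intro w hw
    by_contra hge
    push_neg at hge
    have hroot := Polynomial.isRoot_of_mem_roots hw
    rw [Polynomial.IsRoot] at hroot
    rw [hg, hs, eval_line] at hroot
    refine stab hm hp (fun i => z i + (u i : ℂ) * w) (fun i => ?_) hroot
    show 0 < (z i + (u i : ℂ) * w).im
    rw [Complex.add_im, Complex.mul_im]
    simp only [Complex.ofReal_re, Complex.ofReal_im, zero_mul, add_zero]
    have := mul_nonneg (hu i).le hge
    linarith [hz i]
  have he1 : Polynomial.eval 0 (derivative g) = MvPolynomial.aeval z (Dop u p) := by
    rw [hg, hs, derivative_line, Polynomial.eval_finset_sum, Dop, map_sum]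
    refine Finset.sum_congr rfl fun i _ => ?_
    have harg : (fun j => z j + (u j : ℂ) * 0) = z := by funext j; ring
    rw [Polynomial.eval_mul, Polynomial.eval_C, eval_line, harg, map_mul, MvPolynomial.aeval_C]
    rfl
  have hcardm : g.roots.card = m := by rw [splits_iff_card_roots.mp hsplits, hdegeq]
  have hSne : g.roots ≠ 0 := by
    intro h
    rw [h] at hcardm
    simp only [Multiset.card_zero] at hcardm
    omega
  rw [← he1]
  conv_lhs => rw [hprod]
  exact eval_zero_derivative_ne_zero hlead _ hSne hrootsim

theorem deriv_posHyp {m : ℕ} (hm : 1 ≤ m) {p : MvPolynomial (Fin n) ℝ} (hp : PosHyperbolic p m)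
    {u : Fin n → ℝ} (hu : ∀ i, 0 < u i) : PosHyperbolic (Dop u p) (m - 1) := by
  obtain ⟨k, rfl⟩ : ∃ k, m = k + 1 := ⟨m - 1, by omega⟩
  have hhom : (Dop u p).IsHomogeneous k := Dop_isHomogeneous hp.1 u
  refine ⟨by simpa using hhom, fun x hx => deriv_pos hm hp hu hx, ?_⟩
  intro v x hv
  set f := lineRestrict (Dop u p) x v with hf
  have hdeg : f.natDegree ≤ k := natDegree_line_le x v hhom
  have hcoeff : f.coeff k = MvPolynomial.eval v (Dop u p) := by
    rw [hf, show lineRestrict (Dop u p) x v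
        = (MvPolynomial.aeval fun i => (C (x i) + C (v i) * X : Polynomial ℝ)) (Dop u p) from rfl,
      coeff_line_top x v hhom, aeval_self_eq_eval]
  have hpos := deriv_pos hm hp hu hv
  have hne : f.coeff k ≠ 0 := by rw [hcoeff]; exact ne_of_gt hpos
  have hdegeq : f.natDegree = k := le_antisymm hdeg (Polynomial.le_natDegree_of_ne_zero hne)
  have hf0 : f ≠ 0 := fun h => hne (by simp [h])
  have hallreal : ∀ z : ℂ, Polynomial.aeval z f = 0 → z.im = 0 := by
    have key : ∀ w : ℂ, 0 < w.im → Polynomial.aeval w f ≠ 0 := by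
      intro w hw
      rw [hf, show lineRestrict (Dop u p) x v
          = (MvPolynomial.aeval fun i => (C (x i) + C (v i) * X : Polynomial ℝ)) (Dop u p) from rfl,
        aeval_line_complex]
      refine deriv_stab hm hp hu _ fun i => ?_
      show 0 < ((x i : ℂ) + (v i : ℂ) * w).im
      rw [Complex.add_im, Complex.mul_im]
      simp only [Complex.ofReal_re, Complex.ofReal_im, zero_mul, add_zero]
      have := mul_pos (hv i) hw
      linarith
    intro z hz0
    by_contra him
    rcases lt_or_gt_of_ne him with hlt | hgt
    · have hconj : Polynomial.aeval ((starRingEnd ℂ) z) f = 0 := by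
        rw [Polynomial.aeval_conj, hz0, map_zero]
      have : 0 < ((starRingEnd ℂ) z).im := by
        rw [Complex.conj_im]
        linarith
      exact key _ this hconj
    · exact key z hgt hz0
  have hcard := real_roots_card hf0 hallreal
  rw [hcard, hdegeq]
  omega

noncomputable def iterD : List (Fin n) → ℝ → MvPolynomial (Fin n) ℝ → MvPolynomial (Fin n) ℝ
  | [], _, q => q
  | i :: T, ε, q => iterD T ε (Dop (fun j => (if j = i then 1 else 0) + ε) q)

noncomputable def pfold : List (Fin n) → MvPolynomial (Fin n) ℝ → MvPolynomial (Fin n) ℝ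
  | [], q => q
  | i :: T, q => pfold T (MvPolynomial.pderiv i q)

noncomputable def iterDP :
    List (Fin n) → MvPolynomial (Fin n) (Polynomial ℝ) → MvPolynomial (Fin n) (Polynomial ℝ)
  | [], q => q
  | i :: T, q => iterDP T (Dop (fun j => C (if j = i then (1 : ℝ) else 0) + X) q)

theorem iterD_pos {ε : ℝ} (hε : 0 < ε) :
    ∀ (L : List (Fin n)) (q : MvPolynomial (Fin n) ℝ), PosHyperbolic q L.length →
      0 < MvPolynomial.eval (fun _ => (1 : ℝ)) (iterD L ε q) := by
  intro L
  induction L with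
  | nil => exact fun q hq => hq.2.1 _ fun i => one_pos
  | cons i T ih =>
      intro q hq
      have hq' : PosHyperbolic q (T.length + 1) := hq
      have hd := deriv_posHyp (by omega) hq'
        (u := fun j => (if j = i then 1 else 0) + ε) (fun j => by
          show 0 < (if j = i then 1 else 0) + ε
          by_cases h : j = i
          · rw [if_pos h]; linarith
          · rw [if_neg h]; linarith)
      rw [Nat.add_sub_cancel] at hd
      exact ih _ hd

theorem Dop_zero (i : Fin n) (q : MvPolynomial (Fin n) ℝ) :
    Dop (fun j => (if j = i then (1 : ℝ) else 0) + 0) q = MvPolynomial.pderiv i q := by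
  classical
  rw [Dop]
  rw [Finset.sum_congr rfl (fun j (_ : j ∈ Finset.univ) => by
    rw [show MvPolynomial.C ((fun j => (if j = i then (1:ℝ) else 0) + 0) j) * MvPolynomial.pderiv j q
        = if j = i then MvPolynomial.pderiv j q else 0 by
      by_cases h : j = i <;> simp [h]])]
  rw [Finset.sum_ite_eq' Finset.univ i]
  simp

theorem iterD_zero : ∀ (L : List (Fin n)) (q : MvPolynomial (Fin n) ℝ),
    iterD L 0 q = pfold L q := by
  intro L
  induction L with
  | nil => intro q; rfl
  | cons i T ih => intro q; rw [iterD, Dop_zero, pfold]; exact ih _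

theorem map_Dop (φ : Polynomial ℝ →+* ℝ) (v : Fin n → Polynomial ℝ)
    (q : MvPolynomial (Fin n) (Polynomial ℝ)) :
    MvPolynomial.map φ (Dop v q) = Dop (fun j => φ (v j)) (MvPolynomial.map φ q) := by
  rw [Dop, Dop, map_sum]
  refine Finset.sum_congr rfl fun i _ => ?_
  rw [map_mul, MvPolynomial.map_C, MvPolynomial.pderiv_map]

theorem map_iterDP (ε : ℝ) : ∀ (L : List (Fin n)) (q : MvPolynomial (Fin n) (Polynomial ℝ)),
    MvPolynomial.map (Polynomial.evalRingHom ε) (iterDP L q)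
      = iterD L ε (MvPolynomial.map (Polynomial.evalRingHom ε) q) := by
  intro L
  induction L with
  | nil => intro q; rfl
  | cons i T ih =>
      intro q
      rw [iterDP, iterD, ih, map_Dop,
        show (fun j => (Polynomial.evalRingHom ε) (C (if j = i then (1:ℝ) else 0) + X))
            = (fun j => (if j = i then (1:ℝ) else 0) + ε) from funext fun j => by
          by_cases h : j = i <;> simp [h]]

theorem eval_one_map (φ : Polynomial ℝ →+* ℝ) (q : MvPolynomial (Fin n) (Polynomial ℝ)) :
    MvPolynomial.eval (fun _ => (1 : ℝ)) (MvPolynomial.map φ q)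
      = φ (MvPolynomial.eval (fun _ => (1 : Polynomial ℝ)) q) := by
  have h := MvPolynomial.eval₂_comp_left φ (RingHom.id (Polynomial ℝ))
    (fun _ => (1 : Polynomial ℝ)) q
  rw [MvPolynomial.eval₂_id] at h
  rw [h, MvPolynomial.eval_map, RingHom.comp_id φ]
  congr 1
  funext x
  simp

theorem map_eval_map_C (ε : ℝ) (p : MvPolynomial (Fin n) ℝ) :
    MvPolynomial.map (Polynomial.evalRingHom ε) (MvPolynomial.map (Polynomial.C) p) = p := by
  rw [MvPolynomial.map_map]
  have hcomp : (Polynomial.evalRingHom ε).comp Polynomial.C = RingHom.id ℝ := by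
    ext r; simp
  rw [hcomp, MvPolynomial.map_id]

theorem poly_nonneg_at_zero {G : Polynomial ℝ} (h : ∀ ε > (0:ℝ), 0 < G.eval ε) :
    0 ≤ G.eval 0 := by
  have ht : Filter.Tendsto (fun x => G.eval x) (nhdsWithin 0 (Set.Ioi 0)) (nhds (G.eval 0)) :=
    (G.continuous.tendsto 0).mono_left nhdsWithin_le_nhds
  refine ge_of_tendsto ht ?_
  filter_upwards [self_mem_nhdsWithin] with x hx
  exact (h x hx).le

noncomputable def ofL : List (Fin n) → (Fin n →₀ ℕ)
  | [] => 0
  | i :: T => ofL T + Finsupp.single i 1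

noncomputable def cL : List (Fin n) → ℕ
  | [] => 1
  | i :: T => (ofL T i + 1) * cL T

theorem cL_pos : ∀ L : List (Fin n), 0 < cL L := by
  intro L
  induction L with
  | nil => exact one_pos
  | cons i T ih =>
      rw [cL]
      exact Nat.mul_pos (Nat.succ_pos _) ih

theorem coeff_pfold : ∀ (L : List (Fin n)) (q : MvPolynomial (Fin n) ℝ),
    MvPolynomial.coeff 0 (pfold L q) = (cL L : ℝ) * MvPolynomial.coeff (ofL L) q := by
  intro L
  induction L with
  | nil => intro q; simp [pfold, ofL, cL]
  | cons i T ih =>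
      intro q
      rw [pfold, ih, coeff_pderiv, ofL, cL]
      push_cast
      ring

theorem ofL_apply : ∀ (L : List (Fin n)) (j : Fin n), ofL L j = L.count j := by
  intro L
  induction L with
  | nil => intro j; simp [ofL]
  | cons i T ih =>
      intro j
      rw [ofL, Finsupp.add_apply, ih, List.count_cons, Finsupp.single_apply]
      by_cases h : j = i <;> simp [h]

theorem pfold_homog : ∀ (L : List (Fin n)) (q : MvPolynomial (Fin n) ℝ) (k : ℕ),
    q.IsHomogeneous (L.length + k) → (pfold L q).IsHomogeneous k := by
  intro L
  induction L with
  | nil => intro q k h; simpa [pfold] using h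
  | cons i T ih =>
      intro q k h
      rw [pfold]
      refine ih _ k ?_
      refine IsHomogeneous.pderiv' ?_ i
      have : (i :: T).length + k = (T.length + k) + 1 := by
        simp [List.length_cons]; omega
      rw [this] at h
      exact h

theorem eval_one_of_homog0 {q : MvPolynomial (Fin n) ℝ} (h : q.IsHomogeneous 0) :
    MvPolynomial.eval (fun _ => (1 : ℝ)) q = MvPolynomial.coeff 0 q := by
  rw [MvPolynomial.eval_eq]
  have hsupp : ∀ d ∈ q.support, d = 0 := by
    intro d hd
    have hnz := MvPolynomial.mem_support_iff.mp hd
    have hw := h hnz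
    have hdeg : d.degree = 0 := by rw [Finsupp.degree_eq_weight_one]; exact hw
    exact (Finsupp.degree_eq_zero_iff d).mp hdeg
  by_cases h0 : (0 : Fin n →₀ ℕ) ∈ q.support
  · rw [Finset.sum_eq_single_of_mem 0 h0 (fun b hb hbne => absurd (hsupp b hb) hbne)]
    simp
  · rw [Finset.sum_eq_zero (fun d hd => absurd (hsupp d hd ▸ hd) h0)]
    rw [MvPolynomial.notMem_support_iff.mp h0]

theorem stmt3 {n m : ℕ} (p : MvPolynomial (Fin n) ℝ) (hm : 1 ≤ m)
    (hp : PosHyperbolic p m) :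
    ∀ d : Fin n →₀ ℕ, 0 ≤ p.coeff d := by
  intro d
  by_cases hd : p.coeff d = 0
  · exact le_of_eq hd.symm
  · have hdeg : d.degree = m := by
      rw [Finsupp.degree_eq_weight_one]
      exact hp.1 hd
    set L : List (Fin n) := (Finsupp.toMultiset d).toList with hLdef
    have hcoeL : (L : Multiset (Fin n)) = Finsupp.toMultiset d := Multiset.coe_toList _
    have hlen : L.length = m := by
      have h1 : L.length = Multiset.card (Finsupp.toMultiset d) := by
        rw [← hcoeL]; rfl
      rw [h1, Finsupp.card_toMultiset, ← hdeg]
      rfl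
    have hofL : ofL L = d := by
      ext j
      rw [ofL_apply]
      have h2 : (L : Multiset (Fin n)).count j = d j := by
        rw [hcoeL, Finsupp.count_toMultiset]
      rw [← h2, Multiset.coe_count]
    set Q := iterDP L (MvPolynomial.map Polynomial.C p) with hQ
    set G := MvPolynomial.eval (fun _ => (1 : Polynomial ℝ)) Q with hG
    have hGeval : ∀ ε : ℝ, G.eval ε = MvPolynomial.eval (fun _ => (1 : ℝ)) (iterD L ε p) := by
      intro ε
      have h1 : G.eval ε = (Polynomial.evalRingHom ε) G := rfl
      rw [h1, hG, ← eval_one_map, hQ, map_iterDP, map_eval_map_C]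
    have hposG : ∀ ε > (0:ℝ), 0 < G.eval ε := by
      intro ε hε
      rw [hGeval]
      exact iterD_pos hε L p (by rw [hlen]; exact hp)
    have h0 : 0 ≤ G.eval 0 := poly_nonneg_at_zero hposG
    rw [hGeval 0, iterD_zero] at h0
    have hhom0 : (pfold L p).IsHomogeneous 0 :=
      pfold_homog L p 0 (by rw [Nat.add_zero, hlen]; exact hp.1)
    rw [eval_one_of_homog0 hhom0, coeff_pfold, hofL] at h0
    have hc : (0:ℝ) < (cL L : ℝ) := by exact_mod_cast cL_pos L
    by_contra hneg
    push_neg at hneg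
    nlinarith
end

section
/- Let A = (a_{ij}) be an m × n real matrix with nonnegative entries such that every row of A is nonzero, and let k be an integer with 1 ≤ k ≤ m. Then the polynomial p_{k,A}(x) := Σ_{1 ≤ i_1 < ⋯ < i_k ≤ m} Π_{j=1}^{k} (A x)_{i_j}, for x ∈ ℝ^n, is a positive hyperbolic polynomial of degree k in n variables. -/
/-- The linear form `x ↦ (A x)_i` as a multivariate polynomial. -/
noncomputable def rowForm {m n : ℕ} (A : Matrix (Fin m) (Fin n) ℝ) (i : Fin m) :
    MvPolynomial (Fin n) ℝ :=
  ∑ j, MvPolynomial.C (A i j) * MvPolynomial.X j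

/-- The polynomial `p_{k,A}(x) = ∑_{1 ≤ i_1 < ⋯ < i_k ≤ m} ∏_{j=1}^k (A x)_{i_j}`. -/
noncomputable def pkA {m n : ℕ} (k : ℕ) (A : Matrix (Fin m) (Fin n) ℝ) :
    MvPolynomial (Fin n) ℝ :=
  ∑ s ∈ Finset.powersetCard k (Finset.univ : Finset (Fin m)), ∏ i ∈ s, rowForm A i


open Polynomial Finset

namespace Stmt4Aux

/-- Logarithmic-derivative lemma: for a monic product of `X - C r` with all `r` in the
open lower half plane, the value at `w` with `0 ≤ im w` is nonzero, and the logarithmic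
derivative has negative imaginary part (strictly, when the multiset is nonempty). -/
lemma logderiv (s : Multiset ℂ) (hs : ∀ r ∈ s, r.im < 0) (w : ℂ) (hw : 0 ≤ w.im) :
    eval w (s.map fun r => X - C r).prod ≠ 0 ∧
      (eval w (derivative (s.map fun r => X - C r).prod) /
        eval w (s.map fun r => X - C r).prod).im ≤ 0 ∧
      (s ≠ 0 → (eval w (derivative (s.map fun r => X - C r).prod) /
        eval w (s.map fun r => X - C r).prod).im < 0) := by
  induction s using Multiset.induction with
  | empty => simp
  | cons r s ih =>
    have hr : r.im < 0 := hs r (Multiset.mem_cons_self r s)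
    obtain ⟨hQ0, hQle, -⟩ := ih (fun x hx => hs x (Multiset.mem_cons_of_mem hx))
    set Q := (s.map fun a => X - C a).prod with hQ
    have hwr : w - r ≠ 0 := by
      intro h
      have : (w - r).im = 0 := by rw [h]; simp
      simp only [Complex.sub_im] at this
      linarith
    have hprod : ((r ::ₘ s).map fun a => X - C a).prod = (X - C r) * Q := by
      rw [Multiset.map_cons, Multiset.prod_cons]
    have hD : derivative (((r ::ₘ s).map fun a => X - C a).prod) = Q + (X - C r) * derivative Q := by
      rw [hprod, derivative_mul, derivative_X_sub_C, one_mul]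
    have hev : eval w (((r ::ₘ s).map fun a => X - C a).prod) = (w - r) * eval w Q := by
      rw [hprod]; simp
    have hne : (w - r) * eval w Q ≠ 0 := mul_ne_zero hwr hQ0
    have hratio :
        eval w (derivative (((r ::ₘ s).map fun a => X - C a).prod)) /
          eval w (((r ::ₘ s).map fun a => X - C a).prod)
        = (w - r)⁻¹ + eval w (derivative Q) / eval w Q := by
      rw [hD, hev]
      simp only [eval_add, eval_mul, eval_sub, eval_X, eval_C]
      field_simp
    have hinv : ((w - r)⁻¹).im < 0 := by
      rw [Complex.inv_im]
      have h1 : 0 < (w - r).im := by simp only [Complex.sub_im]; linarith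
      have h2 : 0 < Complex.normSq (w - r) := Complex.normSq_pos.mpr hwr
      exact div_neg_of_neg_of_pos (by linarith) h2
    refine ⟨by rw [hev]; exact hne, ?_, fun _ => ?_⟩ <;>
      rw [hratio, Complex.add_im] <;> linarith

lemma gaussLucas (p : Polynomial ℂ) (hp : ∀ z ∈ p.roots, z.im < 0) :
    ∀ z ∈ (derivative p).roots, z.im < 0 := by
  intro z hz
  by_contra hcon
  push_neg at hcon
  have hd0 : derivative p ≠ 0 := by
    intro h; rw [h] at hz; simp at hz
  have hzr : eval z (derivative p) = 0 := isRoot_of_mem_roots hz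
  have hp0 : p ≠ 0 := by intro h; rw [h] at hd0; simp at hd0
  have hcard : Multiset.card p.roots = p.natDegree :=
    splits_iff_card_roots.mp (IsAlgClosed.splits p)
  have hfact := C_leadingCoeff_mul_prod_multiset_X_sub_C (p := p) hcard
  by_cases hs : p.roots = 0
  · rw [hs] at hfact
    simp only [Multiset.map_zero, Multiset.prod_zero, mul_one] at hfact
    rw [← hfact] at hd0
    simp at hd0
  · obtain ⟨hM0, -, hlt⟩ := logderiv p.roots hp z hcon
    have hlt' := hlt hs
    have hDM : eval z (derivative ((p.roots.map fun a => X - C a).prod)) ≠ 0 := by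
      intro h
      rw [h] at hlt'
      simp at hlt'
    apply hDM
    have : derivative p = C p.leadingCoeff * derivative ((p.roots.map fun a => X - C a).prod) := by
      conv_lhs => rw [← hfact]
      rw [derivative_mul, derivative_C, zero_mul, zero_add]
    rw [this] at hzr
    simp only [eval_mul, eval_C] at hzr
    exact (mul_eq_zero.mp hzr).resolve_left (by
      simpa using leadingCoeff_ne_zero.mpr hp0)

lemma gaussLucasIter (p : Polynomial ℂ) (hp : ∀ z ∈ p.roots, z.im < 0) (j : ℕ) :
    ∀ z ∈ (derivative^[j] p).roots, z.im < 0 := by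
  induction j with
  | zero => simpa using hp
  | succ j ih => rw [Function.iterate_succ_apply']; exact gaussLucas _ ih

end Stmt4Aux

namespace Stmt4Aux

open Finset

lemma esymm_ne_zero {m : ℕ} (k : ℕ) (hkm : k ≤ m) (c : Fin m → ℂ) (hc : ∀ i, 0 < (c i).im) :
    (∑ S ∈ powersetCard k (univ : Finset (Fin m)), ∏ i ∈ S, c i) ≠ 0 := by
  set h : Polynomial ℂ := ∏ i, (X + C (c i)) with hh
  have hmonic : h.Monic := monic_prod_of_monic _ _ fun i _ => monic_X_add_C _
  have hdeg : h.natDegree = m := by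
    rw [hh, natDegree_prod _ _ fun i _ => (monic_X_add_C _).ne_zero]
    simp
  have hroots : ∀ z ∈ h.roots, z.im < 0 := by
    intro z hz
    have hzr : eval z h = 0 := isRoot_of_mem_roots hz
    rw [hh, eval_prod] at hzr
    obtain ⟨i, -, hi⟩ := Finset.prod_eq_zero_iff.mp hzr
    simp only [eval_add, eval_X, eval_C] at hi
    have hz' : z = -c i := by linear_combination hi
    rw [hz']
    simpa using hc i
  have hiter := gaussLucasIter h hroots (m - k)
  have hcoeffk : (derivative^[m - k] h).coeff k = (m.descFactorial (m - k) : ℂ) := by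
    rw [coeff_iterate_derivative]
    have : k + (m - k) = m := Nat.add_sub_cancel' hkm
    rw [this, ← hdeg, hmonic.coeff_natDegree]
    simp
  have hdf : m.descFactorial (m - k) ≠ 0 := by
    rw [Ne, Nat.descFactorial_eq_zero_iff_lt, not_lt]
    exact Nat.sub_le m k
  have hne : derivative^[m - k] h ≠ 0 := by
    intro h0
    rw [h0] at hcoeffk
    simp only [coeff_zero] at hcoeffk
    exact hdf (by exact_mod_cast hcoeffk.symm)
  have hc0 : h.coeff (m - k) = ∑ S ∈ powersetCard k (univ : Finset (Fin m)), ∏ i ∈ S, c i := by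
    have hle : m - k ≤ #(univ : Finset (Fin m)) := by
      simp only [card_univ, Fintype.card_fin]
      exact Nat.sub_le m k
    have := Finset.prod_X_add_C_coeff (univ : Finset (Fin m)) c hle
    rw [← hh] at this
    rw [this]
    congr 1
    simp [Nat.sub_sub_self hkm]
  intro hsum0
  have hroot0 : (0 : ℂ) ∈ (derivative^[m - k] h).roots := by
    rw [mem_roots hne]
    have : (derivative^[m - k] h).coeff 0 = 0 := by
      rw [coeff_iterate_derivative, zero_add, hc0, hsum0, smul_zero]
    rwa [coeff_zero_eq_eval_zero] at this
  have := hiter 0 hroot0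
  simp at this

end Stmt4Aux

namespace Stmt4Aux

open Finset Complex

lemma im_aux (c d : ℝ) (w : ℂ) : ((c : ℂ) + (d : ℂ) * w).im = d * w.im := by
  simp

lemma roots_card_key {m : ℕ} (k : ℕ) (hk1 : 1 ≤ k) (hkm : k ≤ m) (a b : Fin m → ℝ)
    (hb : ∀ i, 0 < b i) :
    (∑ S ∈ powersetCard k (univ : Finset (Fin m)),
      ∏ i ∈ S, (C (a i) + C (b i) * X)).roots.card = k := by
  set q : Polynomial ℝ := ∑ S ∈ powersetCard k (univ : Finset (Fin m)),
      ∏ i ∈ S, (C (a i) + C (b i) * X) with hq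
  have hfac : ∀ i : Fin m, C (a i) + C (b i) * X = C (b i) * (X + C (a i / b i)) := by
    intro i
    rw [mul_add, ← C_mul, mul_div_cancel₀ _ (hb i).ne']
    ring
  have hSdeg : ∀ S ∈ powersetCard k (univ : Finset (Fin m)),
      (∏ i ∈ S, (C (a i) + C (b i) * X)).natDegree = k ∧
      (∏ i ∈ S, (C (a i) + C (b i) * X)).coeff k = ∏ i ∈ S, b i := by
    intro S hS
    have hcard : S.card = k := (Finset.mem_powersetCard.mp hS).2
    have hP : (∏ i ∈ S, (X + C (a i / b i))).Monic :=
      monic_prod_of_monic _ _ fun i _ => monic_X_add_C _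
    have hPdeg : (∏ i ∈ S, (X + C (a i / b i))).natDegree = k := by
      rw [natDegree_prod _ _ fun i _ => (monic_X_add_C _).ne_zero]
      simp [hcard]
    have hrw : ∏ i ∈ S, (C (a i) + C (b i) * X)
        = C (∏ i ∈ S, b i) * ∏ i ∈ S, (X + C (a i / b i)) := by
      rw [Finset.prod_congr rfl fun i _ => hfac i, Finset.prod_mul_distrib, ← map_prod]
    have hbS : (∏ i ∈ S, b i) ≠ 0 := (Finset.prod_pos fun i _ => hb i).ne'
    constructor
    · rw [hrw, natDegree_C_mul hbS, hPdeg]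
    · rw [hrw, coeff_C_mul, ← hPdeg, hP.coeff_natDegree, mul_one]
  have hnonempty : (powersetCard k (univ : Finset (Fin m))).Nonempty :=
    Finset.powersetCard_nonempty.mpr (by simpa using hkm)
  have hcoeffk : q.coeff k = ∑ S ∈ powersetCard k (univ : Finset (Fin m)), ∏ i ∈ S, b i := by
    rw [hq, finset_sum_coeff]
    exact Finset.sum_congr rfl fun S hS => (hSdeg S hS).2
  have hcoeffk_pos : 0 < q.coeff k := by
    rw [hcoeffk]
    exact Finset.sum_pos (fun S _ => Finset.prod_pos fun i _ => hb i) hnonempty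
  have hq0 : q ≠ 0 := fun h => by simp [h] at hcoeffk_pos
  have hdeg : q.natDegree = k := by
    refine le_antisymm ?_ (le_natDegree_of_ne_zero hcoeffk_pos.ne')
    exact natDegree_sum_le_of_forall_le _ _ fun S hS => (hSdeg S hS).1.le
  set qc := q.map (algebraMap ℝ ℂ) with hqc
  have hqcdeg : qc.natDegree = k := by rw [hqc, natDegree_map, hdeg]
  have hqccard : Multiset.card qc.roots = k := by
    rw [splits_iff_card_roots.mp (IsAlgClosed.splits qc), hqcdeg]
  have heval : ∀ z : ℂ, eval z qc
      = ∑ S ∈ powersetCard k (univ : Finset (Fin m)), ∏ i ∈ S, ((a i : ℂ) + (b i : ℂ) * z) := by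
    intro z
    rw [hqc, eval_map, ← aeval_def, hq, map_sum]
    refine Finset.sum_congr rfl fun S _ => ?_
    rw [map_prod]
    refine Finset.prod_congr rfl fun i _ => ?_
    simp
  have him : ∀ z ∈ qc.roots, z.im = 0 := by
    intro z hz
    have hzr : eval z qc = 0 := isRoot_of_mem_roots hz
    by_contra hne0
    rcases lt_or_gt_of_ne hne0 with hlt | hgt
    · have hconj : eval ((starRingEnd ℂ) z) qc = 0 := by
        rw [hqc, eval_map, ← aeval_def, Polynomial.aeval_conj, aeval_def, ← eval_map, ← hqc, hzr,
          map_zero]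
      have hcim : ∀ i : Fin m, 0 < ((a i : ℂ) + (b i : ℂ) * (starRingEnd ℂ) z).im := by
        intro i
        rw [im_aux]
        have : ((starRingEnd ℂ) z).im = -z.im := Complex.conj_im z
        rw [this]
        exact mul_pos (hb i) (by linarith)
      have := esymm_ne_zero k hkm _ hcim
      rw [heval] at hconj
      exact this hconj
    · have hcim : ∀ i : Fin m, 0 < ((a i : ℂ) + (b i : ℂ) * z).im := by
        intro i
        rw [im_aux]
        exact mul_pos (hb i) hgt
      have := esymm_ne_zero k hkm _ hcim
      rw [heval] at hzr
      exact this hzr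
  set s : Multiset ℝ := qc.roots.map Complex.re with hs
  have h0 : qc.roots.map ((fun r : ℝ => (r : ℂ)) ∘ Complex.re) = qc.roots.map id :=
    Multiset.map_congr rfl fun z hz => Complex.ext rfl (by simpa using (him z hz).symm)
  have hsmap : s.map (fun r : ℝ => (r : ℂ)) = qc.roots := by
    rw [hs, Multiset.map_map, h0, Multiset.map_id]
  have hscard : Multiset.card s = k := by rw [hs, Multiset.card_map, hqccard]
  have hfactor : q = C q.leadingCoeff * (s.map fun r => X - C r).prod := by
    apply Polynomial.map_injective (algebraMap ℝ ℂ) (algebraMap ℝ ℂ).injective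
    have hR : Polynomial.map (algebraMap ℝ ℂ) (C q.leadingCoeff * (s.map fun r => X - C r).prod)
        = qc := by
      rw [Polynomial.map_mul, map_C, Polynomial.map_multiset_prod, Multiset.map_map]
      have h1 : s.map (Polynomial.map (algebraMap ℝ ℂ) ∘ fun r => X - C r)
          = s.map ((fun z : ℂ => X - C z) ∘ (fun r : ℝ => (r : ℂ))) :=
        Multiset.map_congr rfl fun r _ => by simp
      have h2 : s.map (Polynomial.map (algebraMap ℝ ℂ) ∘ fun r => X - C r)
          = qc.roots.map (fun z => X - C z) := by
        rw [h1, ← Multiset.map_map, hsmap]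
      rw [h2]
      have hlc : (algebraMap ℝ ℂ) q.leadingCoeff = qc.leadingCoeff := by
        rw [hqc, leadingCoeff_map]
      rw [hlc]
      exact C_leadingCoeff_mul_prod_multiset_X_sub_C (by rw [hqccard, ← hqcdeg])
    rw [hR, hqc]
  have hlc0 : q.leadingCoeff ≠ 0 := leadingCoeff_ne_zero.mpr hq0
  rw [hfactor, roots_C_mul _ hlc0, roots_multiset_prod_X_sub_C, hscard]

end Stmt4Aux


theorem stmt4 {m n : ℕ} (A : Matrix (Fin m) (Fin n) ℝ)
    (hA : ∀ i j, 0 ≤ A i j) (hrow : ∀ i, ∃ j, A i j ≠ 0)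
    (k : ℕ) (hk1 : 1 ≤ k) (hkm : k ≤ m) :
    PosHyperbolic (pkA k A) k := by
  classical
  have hrowpos : ∀ (x : Fin n → ℝ), (∀ j, 0 < x j) → ∀ i, 0 < ∑ j, A i j * x j := by
    intro x hx i
    obtain ⟨j0, hj0⟩ := hrow i
    refine Finset.sum_pos' (fun j _ => mul_nonneg (hA i j) (hx j).le) ?_
    exact ⟨j0, Finset.mem_univ _, mul_pos ((hA i j0).lt_of_ne (Ne.symm hj0)) (hx j0)⟩
  have hnonempty : (Finset.powersetCard k (Finset.univ : Finset (Fin m))).Nonempty :=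
    Finset.powersetCard_nonempty.mpr (by simpa using hkm)
  have rowhom : ∀ i, (rowForm A i).IsHomogeneous 1 := by
    intro i
    unfold rowForm
    exact MvPolynomial.IsHomogeneous.sum _ _ _ fun j _ => MvPolynomial.isHomogeneous_C_mul_X _ _
  have roweval : ∀ (x : Fin n → ℝ) i, MvPolynomial.eval x (rowForm A i) = ∑ j, A i j * x j := by
    intro x i
    simp [rowForm]
  refine ⟨?_, ?_, ?_⟩
  · unfold pkA
    apply MvPolynomial.IsHomogeneous.sum
    intro S hS
    have hcard : S.card = k := (Finset.mem_powersetCard.mp hS).2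
    have hsum1 : (∑ _i ∈ S, 1) = k := by
      rw [Finset.sum_const, smul_eq_mul, mul_one, hcard]
    have := MvPolynomial.IsHomogeneous.prod S (fun i => rowForm A i) (fun _ => 1)
      (fun i _ => rowhom i)
    rwa [hsum1] at this
  · intro x hx
    unfold pkA
    rw [map_sum]
    refine Finset.sum_pos (fun S _ => ?_) hnonempty
    rw [map_prod]
    refine Finset.prod_pos fun i _ => ?_
    rw [roweval]
    exact hrowpos x hx i
  · intro u x hu
    have hline : lineRestrict (pkA k A) x u
        = ∑ S ∈ Finset.powersetCard k (Finset.univ : Finset (Fin m)), ∏ i ∈ S,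
            (Polynomial.C (∑ j, A i j * x j) + Polynomial.C (∑ j, A i j * u j) * Polynomial.X) := by
      unfold lineRestrict pkA
      rw [map_sum]
      refine Finset.sum_congr rfl fun S _ => ?_
      rw [map_prod]
      refine Finset.prod_congr rfl fun i _ => ?_
      unfold rowForm
      rw [map_sum]
      simp only [map_mul, MvPolynomial.aeval_C, MvPolynomial.aeval_X, Polynomial.algebraMap_eq]
      rw [Finset.sum_congr rfl (fun j _ => by
        rw [mul_add, ← Polynomial.C_mul, ← mul_assoc, ← Polynomial.C_mul] :
          ∀ j ∈ (Finset.univ : Finset (Fin n)), _ = _)]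
      rw [Finset.sum_add_distrib, ← Finset.sum_mul, ← map_sum, ← map_sum]
    rw [hline]
    exact Stmt4Aux.roots_card_key k hk1 hkm _ _ (fun i => hrowpos u hu i)
end

section
/- Let A be an n × n doubly stochastic matrix and let k be an integer with 1 ≤ k ≤ n. Define p_{k,A}(x) := Σ_{1 ≤ i_1 < ⋯ < i_k ≤ n} Π_{j=1}^{k} (A x)_{i_j}. Then Cap p_{k,A} = C(n,k), the binomial coefficient n choose k. -/
/-- `A` is doubly stochastic: nonnegative entries, all row sums and column sums equal `1`. -/
def DoublyStochastic {n : ℕ} (A : Matrix (Fin n) (Fin n) ℝ) : Prop :=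
  (∀ i j, 0 ≤ A i j) ∧ (∀ i, ∑ j, A i j = 1) ∧ (∀ j, ∑ i, A i j = 1)

/-- The capacity of a polynomial:
`Cap p = inf { p(x) : x > 0 entrywise, x_1 ⋯ x_n = 1 }`. -/
noncomputable def Cap {n : ℕ} (p : MvPolynomial (Fin n) ℝ) : ℝ :=
  sInf ((fun x => MvPolynomial.eval x p) ''
    {x : Fin n → ℝ | (∀ i, 0 < x i) ∧ ∏ i, x i = 1})

open Finset

lemma eval_pkA {m n : ℕ} (k : ℕ) (A : Matrix (Fin m) (Fin n) ℝ) (x : Fin n → ℝ) :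
    MvPolynomial.eval x (pkA k A)
      = ∑ S ∈ powersetCard k (univ : Finset (Fin m)), ∏ i ∈ S, ∑ j, A i j * x j := by
  simp [pkA, rowForm]

/-- Number of `k`-subsets of `Fin n` containing a fixed element. -/
lemma count_mem_subsets {n k : ℕ} (hk1 : 1 ≤ k) (i : Fin n) :
    ((Finset.powersetCard k (Finset.univ : Finset (Fin n))).filter (fun S => i ∈ S)).card
      = (n - 1).choose (k - 1) := by
  have h1 : ((Finset.univ : Finset (Fin n)).erase i).card = n - 1 := by
    rw [card_erase_of_mem (mem_univ i), card_univ, Fintype.card_fin]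
  rw [← h1, ← Finset.card_powersetCard]
  apply Finset.card_bij (fun S _ => S.erase i)
  · intro S hS
    simp only [mem_filter, mem_powersetCard] at hS
    obtain ⟨⟨_, hScard⟩, hiS⟩ := hS
    refine mem_powersetCard.2 ⟨erase_subset_erase i (subset_univ S), ?_⟩
    rw [card_erase_of_mem hiS, hScard]
  · intro S hS T hT h
    simp only [mem_filter] at hS hT
    rw [← insert_erase hS.2, ← insert_erase hT.2, h]
  · intro T hT
    rw [mem_powersetCard] at hT
    obtain ⟨hTsub, hTcard⟩ := hT
    have hiT : i ∉ T := fun h => (notMem_erase i _) (hTsub h)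
    refine ⟨insert i T, ?_, ?_⟩
    · simp only [mem_filter, mem_powersetCard]
      refine ⟨⟨subset_univ _, ?_⟩, mem_insert_self i T⟩
      rw [card_insert_of_notMem hiT, hTcard]
      omega
    · rw [erase_insert hiT]

theorem stmt5 {n : ℕ} (A : Matrix (Fin n) (Fin n) ℝ) (hA : DoublyStochastic A)
    (k : ℕ) (hk1 : 1 ≤ k) (hkn : k ≤ n) :
    Cap (pkA k A) = (n.choose k : ℝ) := by
  obtain ⟨hpos, hrow, hcol⟩ := hA
  set N : ℕ := n.choose k with hN
  have hNpos : 0 < N := Nat.choose_pos hkn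
  have hNR : (0:ℝ) < N := by exact_mod_cast hNpos
  set P := Finset.powersetCard k (Finset.univ : Finset (Fin n)) with hP
  have hcardP : P.card = N := by
    rw [hP, Finset.card_powersetCard, card_univ, Fintype.card_fin]
  -- value at the all-ones vector
  have hone : (fun _ : Fin n => (1:ℝ)) ∈
      {x : Fin n → ℝ | (∀ i, 0 < x i) ∧ ∏ i, x i = 1} := by
    exact ⟨fun i => one_pos, by simp⟩
  have hevalone : MvPolynomial.eval (fun _ : Fin n => (1:ℝ)) (pkA k A) = (N : ℝ) := by
    rw [eval_pkA]
    have : ∀ S ∈ P, (∏ i ∈ S, ∑ j, A i j * (1:ℝ)) = 1 := by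
      intro S _
      refine Finset.prod_eq_one fun i _ => ?_
      simpa using hrow i
    rw [Finset.sum_congr rfl this, Finset.sum_const, hcardP]
    simp
  -- lower bound
  have hlb : ∀ x : Fin n → ℝ, (∀ i, 0 < x i) → ∏ i, x i = 1 →
      (N : ℝ) ≤ MvPolynomial.eval x (pkA k A) := by
    intro x hx hx1
    set y : Fin n → ℝ := fun i => ∑ j, A i j * x j with hy
    have hgm : ∀ i, ∏ j, x j ^ (A i j) ≤ y i := fun i =>
      Real.geom_mean_le_arith_mean_weighted univ (A i) x (fun j _ => hpos i j) (hrow i)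
        (fun j _ => (hx j).le)
    have hyg : ∀ i, 0 < ∏ j, x j ^ (A i j) := fun i =>
      Finset.prod_pos fun j _ => Real.rpow_pos_of_pos (hx j) _
    have hypos : ∀ i, 0 < y i := fun i => lt_of_lt_of_le (hyg i) (hgm i)
    have h1 : ∏ i, ∏ j, x j ^ (A i j) = 1 := by
      rw [Finset.prod_comm]
      have hj : ∀ j : Fin n, (∏ i, x j ^ (A i j)) = x j := by
        intro j
        rw [← Real.rpow_sum_of_pos (hx j), hcol j, Real.rpow_one]
      rw [Finset.prod_congr rfl fun j _ => hj j]
      exact hx1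
    have hprody : 1 ≤ ∏ i, y i :=
      h1 ▸ Finset.prod_le_prod (fun i _ => (hyg i).le) (fun i _ => hgm i)
    set z : Finset (Fin n) → ℝ := fun S => ∏ i ∈ S, y i with hz
    have hzpos : ∀ S, 0 < z S := fun S => Finset.prod_pos fun i _ => hypos i
    -- product of all the z S
    have hPprod : ∏ S ∈ P, z S = (∏ i, y i) ^ ((n - 1).choose (k - 1)) := by
      have step1 : ∀ S ∈ P, z S = ∏ i : Fin n, (if i ∈ S then y i else 1) := by
        intro S _
        rw [Finset.prod_ite_mem, Finset.univ_inter]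
      rw [Finset.prod_congr rfl step1, Finset.prod_comm]
      have step2 : ∀ i : Fin n, (∏ S ∈ P, if i ∈ S then y i else 1)
          = y i ^ ((n - 1).choose (k - 1)) := by
        intro i
        rw [← Finset.prod_filter, Finset.prod_const, count_mem_subsets hk1]
      rw [Finset.prod_congr rfl fun i _ => step2 i, ← Finset.prod_pow]
    have hzprod1 : 1 ≤ ∏ S ∈ P, z S := by
      rw [hPprod]; exact one_le_pow₀ hprody
    -- AM-GM over the subsets
    have hAMGM := Real.geom_mean_le_arith_mean_weighted P (fun _ => (N:ℝ)⁻¹) z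
      (fun _ _ => by positivity)
      (by rw [Finset.sum_const, hcardP, nsmul_eq_mul, mul_inv_cancel₀ hNR.ne'])
      (fun S _ => (hzpos S).le)
    rw [Real.finset_prod_rpow P z (fun S _ => (hzpos S).le)] at hAMGM
    have hge1 : 1 ≤ ∑ S ∈ P, (N:ℝ)⁻¹ * z S :=
      le_trans (Real.one_le_rpow hzprod1 (by positivity)) hAMGM
    rw [← Finset.mul_sum] at hge1
    have : (N : ℝ) ≤ ∑ S ∈ P, z S := by
      have h2 := mul_le_mul_of_nonneg_left hge1 hNR.le
      rw [mul_one, ← mul_assoc, mul_inv_cancel₀ hNR.ne', one_mul] at h2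
      exact h2
    rwa [eval_pkA]
  -- conclude
  have hmem : (N : ℝ) ∈ (fun x => MvPolynomial.eval x (pkA k A)) ''
      {x : Fin n → ℝ | (∀ i, 0 < x i) ∧ ∏ i, x i = 1} :=
    ⟨fun _ => 1, hone, hevalone⟩
  have hbdd : ∀ v ∈ (fun x => MvPolynomial.eval x (pkA k A)) ''
      {x : Fin n → ℝ | (∀ i, 0 < x i) ∧ ∏ i, x i = 1}, (N : ℝ) ≤ v := by
    rintro v ⟨x, ⟨hx, hx1⟩, rfl⟩
    exact hlb x hx hx1
  refine le_antisymm (csInf_le ⟨(N:ℝ), hbdd⟩ hmem) (le_csInf ⟨_, hmem⟩ hbdd)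
end

section
/- Let k ≥ 1 be an integer, let u = (u_1,…,u_k) and v = (v_1,…,v_k) be vectors in ℝ^k with all coordinates strictly positive, define f(t) := Π_{i=1}^{k} (u_i t + v_i), and set K := inf_{t > 0} f(t)/t. Then f′(0) = K when k = 1, and f′(0) ≥ ((k−1)/k)^{k−1} K when k ≥ 2; moreover, for k ≥ 2 equality holds if and only if v_1/u_1 = v_2/u_2 = ⋯ = v_k/u_k. -/
open Finset
lemma amgm {ι : Type*} (s : Finset ι) (y : ι → ℝ) (hy : ∀ i ∈ s, 0 ≤ y i) :
    ∏ i ∈ s, y i ≤ ((∑ i ∈ s, y i) / s.card) ^ s.card := by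
  rcases s.eq_empty_or_nonempty with rfl | hs
  · simp
  have hn : 0 < (s.card : ℝ) := by exact_mod_cast Finset.card_pos.2 hs
  have key := Real.geom_mean_le_arith_mean_weighted s (fun _ => (s.card : ℝ)⁻¹) y
    (fun _ _ => by positivity) (by simp only [Finset.sum_const, nsmul_eq_mul]; exact mul_inv_cancel₀ hn.ne') hy
  calc ∏ i ∈ s, y i = (∏ i ∈ s, y i ^ ((s.card : ℝ)⁻¹)) ^ s.card := by
        rw [← Finset.prod_pow]
        refine Finset.prod_congr rfl fun i hi => ?_
        rw [← Real.rpow_natCast (y i ^ _), ← Real.rpow_mul (hy i hi),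
          inv_mul_cancel₀ hn.ne', Real.rpow_one]
    _ ≤ (∑ i ∈ s, (s.card : ℝ)⁻¹ * y i) ^ s.card := by
        refine pow_le_pow_left₀ (Finset.prod_nonneg fun i hi => Real.rpow_nonneg (hy i hi) _) key _
    _ = ((∑ i ∈ s, y i) / s.card) ^ s.card := by
        rw [← Finset.mul_sum]; ring_nf

lemma amgm_strict {k : ℕ} (i j : Fin k) (hij : i ≠ j) (y : Fin k → ℝ)
    (hy : ∀ l, 0 < y l) (hne : y i ≠ y j) :
    ∏ l, y l < ((∑ l, y l) / k) ^ k := by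
  classical
  set m : ℝ := (y i + y j) / 2 with hm
  have hm0 : 0 < m := by have := hy i; have := hy j; positivity
  set y' : Fin k → ℝ := fun l => if l = i ∨ l = j then m else y l with hy'
  have hji : j ∈ Finset.univ.erase i := Finset.mem_erase.2 ⟨hij.symm, Finset.mem_univ j⟩
  have hsplitP : ∀ z : Fin k → ℝ, ∏ l, z l =
      z i * (z j * ∏ l ∈ (Finset.univ.erase i).erase j, z l) := by
    intro z
    rw [← Finset.mul_prod_erase _ _ (Finset.mem_univ i), ← Finset.mul_prod_erase _ _ hji]
  have hsplitS : ∀ z : Fin k → ℝ, ∑ l, z l =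
      z i + (z j + ∑ l ∈ (Finset.univ.erase i).erase j, z l) := by
    intro z
    rw [← Finset.add_sum_erase _ _ (Finset.mem_univ i), ← Finset.add_sum_erase _ _ hji]
  have hrest : ∀ l ∈ (Finset.univ.erase i).erase j, y' l = y l := by
    intro l hl
    simp only [Finset.mem_erase] at hl
    simp [hy', hl.1, hl.2.1]
  have hrestP : ∏ l ∈ (Finset.univ.erase i).erase j, y' l
      = ∏ l ∈ (Finset.univ.erase i).erase j, y l := Finset.prod_congr rfl hrest
  have hrestpos : 0 < ∏ l ∈ (Finset.univ.erase i).erase j, y l :=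
    Finset.prod_pos fun l _ => hy l
  have hsum : ∑ l, y' l = ∑ l, y l := by
    rw [hsplitS y', hsplitS y, Finset.sum_congr rfl hrest]
    simp [hy', hij, hm]; ring
  have hmul : y i * y j < m * m := by nlinarith [sq_pos_of_ne_zero (sub_ne_zero.2 hne)]
  have hlt : ∏ l, y l < ∏ l, y' l := by
    rw [hsplitP y', hsplitP y, hrestP]
    simp only [hy', if_pos (Or.inl rfl), if_pos (Or.inr rfl)]
    calc y i * (y j * ∏ l ∈ (Finset.univ.erase i).erase j, y l)
        = (y i * y j) * ∏ l ∈ (Finset.univ.erase i).erase j, y l := by ring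
      _ < (m * m) * ∏ l ∈ (Finset.univ.erase i).erase j, y l := by
          exact mul_lt_mul_of_pos_right hmul hrestpos
      _ = m * (m * ∏ l ∈ (Finset.univ.erase i).erase j, y l) := by ring
  have hle := amgm Finset.univ y' (fun l _ => by
    by_cases h : l = i ∨ l = j <;> simp [hy', h] <;> [exact hm0.le; exact (hy l).le])
  simp only [Finset.card_univ, Fintype.card_fin, hsum] at hle
  exact hlt.trans_le hle

lemma myderiv_eq (k : ℕ) (u v : Fin k → ℝ) (hv : ∀ i, v i ≠ 0) :
    deriv (fun t : ℝ => ∏ i, (u i * t + v i)) 0 = (∏ i, v i) * ∑ i, u i / v i := by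
  have h : ∀ i ∈ (Finset.univ : Finset (Fin k)),
      HasDerivAt (fun t : ℝ => u i * t + v i) (u i) (0:ℝ) := fun i _ => by
    simpa using ((hasDerivAt_id (0:ℝ)).const_mul (u i)).add_const (v i)
  have hD := (HasDerivAt.fun_finsetProd h).deriv
  rw [hD]
  rw [Finset.mul_sum]
  refine Finset.sum_congr rfl fun j _ => ?_
  have he : ∏ l ∈ Finset.univ.erase j, (u l * 0 + v l) = (∏ i, v i) / v j := by
    rw [eq_div_iff (hv j)]
    have := Finset.prod_erase_mul Finset.univ (fun l => u l * 0 + v l) (Finset.mem_univ j)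
    simpa using this
  simp only [smul_eq_mul, he]
  field_simp

lemma prod_rw (k : ℕ) (u v : Fin k → ℝ) (hv : ∀ i, v i ≠ 0) (t : ℝ) :
    ∏ i, (u i * t + v i) = (∏ i, v i) * ∏ i, (1 + t * (u i / v i)) := by
  rw [← Finset.prod_mul_distrib]
  refine Finset.prod_congr rfl fun i _ => ?_
  have h : v i * (t * (u i / v i)) = u i * t := by
    field_simp
    rw [mul_assoc, mul_div_cancel_left₀ _ (hv i)]
  rw [mul_add, mul_one, h]
  ring

set_option maxHeartbeats 1000000

lemma part2 (m : ℕ) (u v : Fin (m+2) → ℝ) (hu : ∀ i, 0 < u i) (hv : ∀ i, 0 < v i) :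
    ((((m+2:ℕ) : ℝ) - 1) / ((m+2:ℕ) : ℝ)) ^ (m+2-1) *
        sInf ((fun t : ℝ => (∏ i, (u i * t + v i)) / t) '' Set.Ioi (0 : ℝ)) ≤
      deriv (fun t : ℝ => ∏ i, (u i * t + v i)) 0 ∧
    (deriv (fun t : ℝ => ∏ i, (u i * t + v i)) 0 =
        ((((m+2:ℕ) : ℝ) - 1) / ((m+2:ℕ) : ℝ)) ^ (m+2-1) *
          sInf ((fun t : ℝ => (∏ i, (u i * t + v i)) / t) '' Set.Ioi (0 : ℝ)) ↔
      ∀ i j, v i / u i = v j / u j) := by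
  have hvne : ∀ i, v i ≠ 0 := fun i => (hv i).ne'
  set b : Fin (m+2) → ℝ := fun i => u i / v i with hbdef
  have hb : ∀ i, 0 < b i := fun i => div_pos (hu i) (hv i)
  set P : ℝ := ∏ i, v i with hPdef
  have hP : 0 < P := Finset.prod_pos fun i _ => hv i
  set S : ℝ := ∑ i, b i with hSdef
  have hS : 0 < S := Finset.sum_pos (fun i _ => hb i) univ_nonempty
  have hD : deriv (fun t : ℝ => ∏ i, (u i * t + v i)) 0 = P * S := myderiv_eq _ u v hvne
  set x : ℝ := ((m:ℝ)+2)/((m:ℝ)+1) with hxdef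
  have hx : 0 < x := by positivity
  set r : ℝ := ((m:ℝ)+1)/((m:ℝ)+2) with hrdef
  have hr : 0 < r := by positivity
  have hrx : r * x = 1 := by rw [hrdef, hxdef]; field_simp
  have hcast : (((m+2:ℕ) : ℝ) - 1) / ((m+2:ℕ) : ℝ) = r := by rw [hrdef]; push_cast; ring
  have hexp : m + 2 - 1 = m + 1 := rfl
  rw [hcast, hexp, hD]
  set A := ((fun t : ℝ => (∏ i, (u i * t + v i)) / t) '' Set.Ioi (0 : ℝ)) with hAdef
  have hmemA : ∀ t : ℝ, 0 < t → (∏ i, (u i * t + v i)) / t ∈ A := fun t ht => ⟨t, ht, rfl⟩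
  have hAne : A.Nonempty := ⟨_, hmemA 1 one_pos⟩
  have hbdd : BddBelow A := by
    refine ⟨0, ?_⟩
    rintro z ⟨t, ht, rfl⟩
    have ht' : (0:ℝ) < t := ht
    have hprod : 0 < ∏ i, (u i * t + v i) :=
      Finset.prod_pos fun i _ => by nlinarith [hu i, hv i]
    exact (div_pos hprod ht').le
  -- AM-GM sum computation
  have hsumy : ∀ t : ℝ, ∑ i : Fin (m+2), (1 + t * b i) = ((m:ℝ)+2) + t * S := by
    intro t
    rw [Finset.sum_add_distrib, Finset.sum_const, ← Finset.mul_sum, ← hSdef]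
    simp [Finset.card_univ]
  have hcard : ((Finset.univ : Finset (Fin (m+2))).card : ℝ) = (m:ℝ)+2 := by
    simp [Finset.card_univ]
  have hcardn : (Finset.univ : Finset (Fin (m+2))).card = m + 2 := by simp
  -- AM-GM bound
  have hAM : ∀ t : ℝ, 0 ≤ t →
      ∏ i, (1 + t * b i) ≤ ((((m:ℝ)+2) + t * S)/(((m:ℝ)+2))) ^ (m+2) := by
    intro t ht
    have h := amgm Finset.univ (fun i => 1 + t * b i)
      (fun i _ => by have := (hb i).le; positivity)
    rwa [hsumy, hcard, hcardn] at h
  have hAMs : ∀ i j, b i ≠ b j → ∀ t : ℝ, 0 < t →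
      ∏ i, (1 + t * b i) < ((((m:ℝ)+2) + t * S)/(((m:ℝ)+2))) ^ (m+2) := by
    intro i j hbij t ht
    have hij : i ≠ j := fun h => hbij (by rw [h])
    have h := amgm_strict i j hij (fun i => 1 + t * b i)
      (fun l => by have := hb l; positivity)
      (by
        intro h
        have h2 : t * b i = t * b j := by
          simpa using h
        exact hbij (mul_left_cancel₀ ht.ne' h2))
    rw [hsumy] at h
    push_cast at h
    exact h
  -- the special point T
  set T : ℝ := ((m:ℝ)+2)/((((m:ℝ)+1)) * S) with hTdef
  have hT : 0 < T := by positivity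
  have hbase : (((m:ℝ)+2) + T * S)/((m:ℝ)+2) = x := by
    rw [hTdef, hxdef]; field_simp; ring
  have hTval : P * x ^ (m+2) / T = x ^ (m+1) * (P * S) := by
    rw [hTdef, hxdef]
    rw [div_div_eq_mul_div, div_eq_iff (by positivity : ((m:ℝ)+2) ≠ 0)]
    rw [pow_succ]
    field_simp
  have hf : ∀ t : ℝ, ∏ i, (u i * t + v i) = P * ∏ i, (1 + t * b i) :=
    fun t => prod_rw _ u v hvne t
  have hgTle : (∏ i, (u i * T + v i)) / T ≤ x ^ (m+1) * (P * S) := by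
    rw [hf T, ← hTval]
    gcongr
    · have h := hAM T hT.le
      rwa [hbase] at h
  have hsInf_le : sInf A ≤ x ^ (m+1) * (P * S) :=
    le_trans (csInf_le hbdd (hmemA T hT)) hgTle
  have hpoweq : r ^ (m+1) * (x ^ (m+1) * (P * S)) = P * S := by
    rw [← mul_assoc, ← mul_pow, hrx, one_pow, one_mul]
  constructor
  · calc r ^ (m+1) * sInf A ≤ r ^ (m+1) * (x ^ (m+1) * (P * S)) :=
        mul_le_mul_of_nonneg_left hsInf_le (pow_nonneg hr.le _)
      _ = P * S := hpoweq
  constructor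
  · -- equality implies all ratios equal
    intro heq
    by_contra hnall
    push_neg at hnall
    obtain ⟨i, j, hij⟩ := hnall
    have hbij : b i ≠ b j := by
      intro h
      apply hij
      rw [← inv_div (u i) (v i), ← inv_div (u j) (v j)]
      exact inv_inj.2 h
    have hstrict : (∏ i, (u i * T + v i)) / T < x ^ (m+1) * (P * S) := by
      rw [hf T, ← hTval]
      have h2 : ∏ i, (1 + T * b i) < x ^ (m+2) := by
        have h := hAMs i j hbij T hT
        rwa [hbase] at h
      have hnum : P * ∏ i, (1 + T * b i) < P * x ^ (m+2) :=
        mul_lt_mul_of_pos_left h2 hP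
      exact (div_lt_div_iff_of_pos_right hT).2 hnum
    have hslt : sInf A < x ^ (m+1) * (P * S) :=
      lt_of_le_of_lt (csInf_le hbdd (hmemA T hT)) hstrict
    have hfin : r ^ (m+1) * sInf A < P * S := by
      calc r ^ (m+1) * sInf A < r ^ (m+1) * (x ^ (m+1) * (P * S)) :=
          mul_lt_mul_of_pos_left hslt (pow_pos hr _)
        _ = P * S := hpoweq
    linarith
  · -- all ratios equal implies equality
    intro hall
    have hball : ∀ i j : Fin (m+2), b i = b j := by
      intro i j
      show u i / v i = u j / v j
      rw [← inv_div (v i) (u i), ← inv_div (v j) (u j), hall i j]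
    have hb0 : 0 < b 0 := hb 0
    have hSb0 : S = ((m:ℝ)+2) * b 0 := by
      rw [hSdef, Finset.sum_congr rfl (fun i _ => hball i 0), Finset.sum_const]
      simp [Finset.card_univ]
    obtain ⟨a0, ha0⟩ : ∃ a0 : ℝ, a0 = 1/(((m:ℝ)+1) * b 0) := ⟨_, rfl⟩
    have ha0p : 0 < a0 := by rw [ha0]; positivity
    have hlow : ∀ z ∈ A, x ^ (m+1) * (P * S) ≤ z := by
      rintro z ⟨t, ht, rfl⟩
      have ht' : (0:ℝ) < t := ht
      show x ^ (m+1) * (P * S) ≤ (∏ i, (u i * t + v i)) / t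
      rw [hf t]
      have hprodconst : ∏ i, (1 + t * b i) = (1 + t * b 0) ^ (m+2) := by
        rw [Finset.prod_congr rfl (fun i _ => by rw [hball i 0]), Finset.prod_const, hcardn]
      rw [hprodconst]
      -- AM-GM at y
      have hy := amgm Finset.univ (fun l : Fin (m+2) => if l = 0 then t else a0)
        (fun l _ => by
          by_cases h : l = (0 : Fin (m+2))
          · simpa [h] using ht'.le
          · simpa [h] using ha0p.le)
      have hmem0 : (0 : Fin (m+2)) ∈ (Finset.univ : Finset (Fin (m+2))) := Finset.mem_univ _
      have hysum : ∑ l : Fin (m+2), (if l = 0 then t else a0) = t + ((m:ℝ)+1) * a0 := by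
        rw [← Finset.add_sum_erase _ _ hmem0, if_pos rfl,
          Finset.sum_congr rfl (fun l hl => if_neg (Finset.mem_erase.1 hl).1),
          Finset.sum_const, Finset.card_erase_of_mem hmem0]
        simp [Finset.card_univ]
      have hyprod : ∏ l : Fin (m+2), (if l = 0 then t else a0) = t * a0 ^ (m+1) := by
        rw [← Finset.mul_prod_erase _ _ hmem0, if_pos rfl,
          Finset.prod_congr rfl (fun l hl => if_neg (Finset.mem_erase.1 hl).1),
          Finset.prod_const, Finset.card_erase_of_mem hmem0]
        simp [Finset.card_univ]
      rw [hysum, hyprod, hcard, hcardn] at hy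
      -- rewrite base of the power
      have hbase2 : (t + ((m:ℝ)+1) * a0) / ((m:ℝ)+2) = (1 + t * b 0) / (b 0 * ((m:ℝ)+2)) := by
        rw [ha0]
        field_simp
        ring
      rw [hbase2, div_pow] at hy
      have hCpos : (0:ℝ) < (b 0 * ((m:ℝ)+2)) ^ (m+2) := by positivity
      have hy2 : t * a0 ^ (m+1) * (b 0 * ((m:ℝ)+2)) ^ (m+2) ≤ (1 + t * b 0) ^ (m+2) :=
        (le_div_iff₀ hCpos).1 hy
      rw [le_div_iff₀ ht']
      have hid : t * a0 ^ (m+1) * (b 0 * ((m:ℝ)+2)) ^ (m+2) = x ^ (m+1) * (((m:ℝ)+2) * b 0) * t := by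
        rw [ha0, hxdef, div_pow, div_pow, mul_pow, mul_pow, one_pow, pow_succ ((m:ℝ)+2) (m+1),
          pow_succ (b 0) (m+1)]
        field_simp
      calc x ^ (m+1) * (P * S) * t
          = P * (t * a0 ^ (m+1) * (b 0 * ((m:ℝ)+2)) ^ (m+2)) := by rw [hSb0, hid]; ring
        _ ≤ P * (1 + t * b 0) ^ (m+2) := mul_le_mul_of_nonneg_left hy2 hP.le
    have hsInfeq : sInf A = x ^ (m+1) * (P * S) :=
      le_antisymm hsInf_le (le_csInf hAne hlow)
    rw [hsInfeq, ← mul_assoc, ← mul_pow, hrx, one_pow, one_mul]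

lemma part1 (u v : Fin 1 → ℝ) (hu : ∀ i, 0 < u i) (hv : ∀ i, 0 < v i) :
    deriv (fun t : ℝ => ∏ i, (u i * t + v i)) 0 =
      sInf ((fun t : ℝ => (∏ i, (u i * t + v i)) / t) '' Set.Ioi (0 : ℝ)) := by
  have hvne : ∀ i, v i ≠ 0 := fun i => (hv i).ne'
  have hD : deriv (fun t : ℝ => ∏ i, (u i * t + v i)) 0 = u 0 := by
    rw [myderiv_eq 1 u v hvne, Fin.prod_univ_one, Fin.sum_univ_one]
    rw [mul_div_assoc', mul_comm, mul_div_assoc, div_self (hvne 0), mul_one]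
  rw [hD]
  symm
  apply csInf_eq_of_forall_ge_of_forall_gt_exists_lt
  · exact ⟨_, ⟨1, Set.mem_Ioi.2 one_pos, rfl⟩⟩
  · rintro z ⟨t, ht, rfl⟩
    have ht' : (0:ℝ) < t := ht
    simp only [Fin.prod_univ_one]
    rw [le_div_iff₀ ht']
    nlinarith [hv 0]
  · intro w hw
    set t : ℝ := 2 * v 0 / (w - u 0) with htdef
    have hwu : 0 < w - u 0 := by linarith
    have ht' : (0:ℝ) < t := by
      rw [htdef]
      exact div_pos (by nlinarith [hv 0]) hwu
    refine ⟨_, ⟨t, ht', rfl⟩, ?_⟩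
    simp only [Fin.prod_univ_one]
    rw [div_lt_iff₀ ht']
    have h2 : (w - u 0) * t = 2 * v 0 := by
      rw [htdef]
      field_simp
    nlinarith [hv 0]


theorem stmt6 (k : ℕ) (hk : 1 ≤ k) (u v : Fin k → ℝ)
    (hu : ∀ i, 0 < u i) (hv : ∀ i, 0 < v i) :
    (k = 1 → deriv (fun t : ℝ => ∏ i, (u i * t + v i)) 0 =
      sInf ((fun t : ℝ => (∏ i, (u i * t + v i)) / t) '' Set.Ioi (0 : ℝ))) ∧
    (2 ≤ k →
      (((k : ℝ) - 1) / k) ^ (k - 1) *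
          sInf ((fun t : ℝ => (∏ i, (u i * t + v i)) / t) '' Set.Ioi (0 : ℝ)) ≤
        deriv (fun t : ℝ => ∏ i, (u i * t + v i)) 0 ∧
      (deriv (fun t : ℝ => ∏ i, (u i * t + v i)) 0 =
          (((k : ℝ) - 1) / k) ^ (k - 1) *
            sInf ((fun t : ℝ => (∏ i, (u i * t + v i)) / t) '' Set.Ioi (0 : ℝ)) ↔
        ∀ i j, v i / u i = v j / u j)) := by
  constructor
  · intro h1
    subst h1
    exact part1 u v hu hv
  · intro h2
    obtain ⟨m, rfl⟩ : ∃ m, k = m + 2 := ⟨k - 2, by omega⟩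
    exact part2 m u v hu hv
end

section
/- Let n ≥ 2 and let B be a real symmetric n × n matrix. Then the quadratic form x ↦ xᵀ B x is a positive hyperbolic polynomial (of degree 2) if and only if B ≠ 0, all entries of B are nonnegative, and λ_2(B) ≤ 0, where λ_2(B) is the second largest eigenvalue of B counted with multiplicity. -/
/-- The quadratic form `x ↦ xᵀ B x` as a multivariate polynomial. -/
noncomputable def quadForm {n : ℕ} (B : Matrix (Fin n) (Fin n) ℝ) :
    MvPolynomial (Fin n) ℝ :=
  ∑ i, ∑ j, MvPolynomial.C (B i j) * MvPolynomial.X i * MvPolynomial.X j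

/-- The second largest value (counted with multiplicity) of a family `v : Fin n → ℝ`:
sort the values in increasing order and take the entry at position `n - 2`. -/
noncomputable def secondLargest {n : ℕ} (v : Fin n → ℝ) : ℝ :=
  (Multiset.sort ↑(List.ofFn v) (· ≤ ·)).getD (n - 2) 0

open Polynomial in
private lemma roots_quad (a b c : ℝ) :
    (C a * X ^ 2 + C b * X + C c).roots.card = 2 ↔ a ≠ 0 ∧ 0 ≤ b ^ 2 - 4 * (a * c) := by
  constructor
  · intro h
    have ha : a ≠ 0 := by
      intro ha
      subst ha
      have h1 : (C b * X + C c).natDegree ≤ 1 := Polynomial.natDegree_linear_le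
      have h2 := Polynomial.card_roots' (C b * X + C c)
      simp only [map_zero, zero_mul, zero_add] at h
      omega
    refine ⟨ha, ?_⟩
    have hp : (C a * X ^ 2 + C b * X + C c) ≠ 0 := by
      intro h0; rw [h0] at h; simp at h
    have hne : (C a * X ^ 2 + C b * X + C c).roots ≠ 0 := by
      intro h0; rw [h0] at h; simp at h
    obtain ⟨r, hr⟩ := Multiset.exists_mem_of_ne_zero hne
    have hroot : a * r ^ 2 + b * r + c = 0 := by
      have h2 := (Polynomial.mem_roots hp).1 hr
      simpa [Polynomial.IsRoot] using h2
    have hid : b ^ 2 - 4 * (a * c) = (2 * a * r + b) ^ 2 := by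
      linear_combination (-4 * a) * hroot
    rw [hid]
    positivity
  · rintro ⟨ha, hd⟩
    have hs2 : Real.sqrt (b ^ 2 - 4 * (a * c)) ^ 2 = b ^ 2 - 4 * (a * c) := Real.sq_sqrt hd
    obtain ⟨r₁, r₂, h1, h2⟩ : ∃ r₁ r₂ : ℝ, a * (r₁ + r₂) = -b ∧ a * (r₁ * r₂) = c := by
      refine ⟨(-b + Real.sqrt (b ^ 2 - 4 * (a * c))) / (2 * a),
        (-b - Real.sqrt (b ^ 2 - 4 * (a * c))) / (2 * a), ?_, ?_⟩
      · field_simp; ring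
      · have e : a * ((-b + Real.sqrt (b ^ 2 - 4 * (a * c))) / (2 * a) *
            ((-b - Real.sqrt (b ^ 2 - 4 * (a * c))) / (2 * a)))
            = (b ^ 2 - Real.sqrt (b ^ 2 - 4 * (a * c)) ^ 2) / (4 * a) := by
          field_simp; ring
        rw [e, hs2, sub_sub_cancel, ← mul_assoc]
        exact mul_div_cancel_left₀ c (by positivity)
    have key : C a * X ^ 2 + C b * X + C c = C a * ((X - C r₁) * (X - C r₂)) := by
      have e : C a * ((X - C r₁) * (X - C r₂))
          = C a * X ^ 2 - C (a * (r₁ + r₂)) * X + C (a * (r₁ * r₂)) := by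
        rw [C_mul, C_mul, C_mul, C_add]; ring
      rw [e, h1, h2, C_neg]; ring
    rw [key, Polynomial.roots_C_mul _ ha, Polynomial.roots_mul
        (mul_ne_zero (Polynomial.X_sub_C_ne_zero r₁) (Polynomial.X_sub_C_ne_zero r₂)),
      Polynomial.roots_X_sub_C, Polynomial.roots_X_sub_C]
    simp

open Polynomial in
private lemma lineRestrict_quadForm {n : ℕ} (B : Matrix (Fin n) (Fin n) ℝ) (x u : Fin n → ℝ) :
    lineRestrict (quadForm B) x u =
      C (∑ i, ∑ j, B i j * u i * u j) * X ^ 2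
        + C (∑ i, ∑ j, B i j * (x i * u j + u i * x j)) * X
        + C (∑ i, ∑ j, B i j * x i * x j) := by
  simp only [lineRestrict, quadForm, map_sum, map_mul, MvPolynomial.aeval_X,
    MvPolynomial.aeval_C, Polynomial.algebraMap_eq]
  rw [Finset.sum_mul, Finset.sum_mul, ← Finset.sum_add_distrib, ← Finset.sum_add_distrib]
  refine Finset.sum_congr rfl fun i _ => ?_
  rw [Finset.sum_mul, Finset.sum_mul, ← Finset.sum_add_distrib, ← Finset.sum_add_distrib]
  refine Finset.sum_congr rfl fun j _ => ?_
  rw [C_add, C_mul, C_mul]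
  ring

private lemma secondLargest_nonpos_iff {n : ℕ} (hn : 2 ≤ n) (v : Fin n → ℝ) :
    secondLargest v ≤ 0 ↔ ∃ k₀ : Fin n, ∀ k, k ≠ k₀ → v k ≤ 0 := by
  classical
  set l := Multiset.sort (↑(List.ofFn v) : Multiset ℝ) (· ≤ ·) with hl
  have hlen : l.length = n := by
    rw [hl, Multiset.length_sort]; simp
  have hsort : l.Pairwise (· ≤ ·) := Multiset.pairwise_sort (s := _) (r := _)
  have hpair := List.pairwise_iff_getElem.1 hsort
  set N := (Finset.univ.filter fun k : Fin n => 0 < v k).card with hN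
  have h1 : List.countP (fun a => decide (0 < a)) l
      = List.countP (fun a => decide (0 < a)) (List.ofFn v) := by
    have h0 := congrArg (Multiset.countP (fun a : ℝ => 0 < a))
      (Multiset.sort_eq (s := (↑(List.ofFn v) : Multiset ℝ)) (r := (· ≤ ·)))
    rw [Multiset.coe_countP, Multiset.coe_countP] at h0
    exact h0
  have h2 : List.countP (fun a => decide (0 < a)) (List.ofFn v) = N := by
    rw [← Multiset.coe_countP, ← Fin.univ_val_map v, Multiset.countP_map, hN,
      Finset.card_def, Finset.filter_val]
  have hcount : List.countP (fun a => decide (0 < a)) l = N := h1.trans h2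
  have hgetD : secondLargest v = l[n-2]'(by omega) := by
    rw [secondLargest, ← hl, List.getD_eq_getElem l 0 (by omega)]
  constructor
  · intro h
    rw [hgetD] at h
    by_contra hcon
    push_neg at hcon
    obtain ⟨k₁, hk₁⟩ := hcon ⟨0, by omega⟩
    obtain ⟨k₂, hk₂⟩ := hcon k₁
    have hN2 : 2 ≤ N := by
      rw [hN]
      have hsub : ({k₁, k₂} : Finset (Fin n)) ⊆ Finset.univ.filter fun k => 0 < v k := by
        intro k hk
        simp only [Finset.mem_insert, Finset.mem_singleton] at hk
        rcases hk with rfl | rfl <;> simp [hk₁.2, hk₂.2]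
      calc 2 = ({k₁, k₂} : Finset (Fin n)).card := by
                rw [Finset.card_insert_of_notMem (by simp [hk₂.1.symm]), Finset.card_singleton]
        _ ≤ _ := Finset.card_le_card hsub
    have htake : (l.take (n-1)).countP (fun a => decide (0 < a)) = 0 := by
      rw [List.countP_eq_zero]
      intro a ha
      obtain ⟨i, hi, hEq⟩ := List.mem_iff_getElem.1 ha
      have hi' : i < n - 1 := by
        have := hi; rw [List.length_take, hlen] at this; omega
      have hilen : i < l.length := by omega
      have hEq' : a = l[i]'hilen := by rw [← hEq, List.getElem_take]
      have hle : l[i]'hilen ≤ l[n-2]'(by omega) := by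
        rcases Nat.lt_or_ge i (n-2) with h2 | h2
        · exact hpair i (n-2) (by omega) (by omega) h2
        · have : i = n - 2 := by omega
          subst this; exact le_refl _
      simp only [decide_eq_true_eq, hEq']
      intro hpos; linarith
    have hdrop : (l.drop (n-1)).countP (fun a => decide (0 < a)) ≤ (l.drop (n-1)).length :=
      List.countP_le_length
    have hdlen : (l.drop (n-1)).length = 1 := by rw [List.length_drop, hlen]; omega
    have hsum : List.countP (fun a => decide (0 < a)) l
        = (l.take (n-1)).countP (fun a => decide (0 < a))
          + (l.drop (n-1)).countP (fun a => decide (0 < a)) := by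
      conv_lhs => rw [← List.take_append_drop (n-1) l]
      rw [List.countP_append]
    omega
  · rintro ⟨k₀, hk₀⟩
    by_contra h
    push_neg at h
    rw [hgetD] at h
    have hNle : N ≤ 1 := by
      rw [hN]
      have hsub : (Finset.univ.filter fun k => 0 < v k) ⊆ {k₀} := by
        intro k hk
        simp only [Finset.mem_filter] at hk
        simp only [Finset.mem_singleton]
        by_contra hne
        exact absurd hk.2 (not_lt.2 (hk₀ k hne))
      calc (Finset.univ.filter fun k => 0 < v k).card ≤ ({k₀} : Finset (Fin n)).card :=
            Finset.card_le_card hsub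
        _ = 1 := Finset.card_singleton _
    have hdall : (l.drop (n-2)).countP (fun a => decide (0 < a)) = (l.drop (n-2)).length := by
      rw [List.countP_eq_length]
      intro a ha
      obtain ⟨i, hi, hEq⟩ := List.mem_iff_getElem.1 ha
      have hilen : n - 2 + i < l.length := by
        have := hi; rw [List.length_drop, hlen] at this; omega
      have hEq' : a = l[n-2+i]'hilen := by rw [← hEq, List.getElem_drop]
      have hge : l[n-2]'(by omega) ≤ l[n-2+i]'hilen := by
        rcases Nat.eq_zero_or_pos i with rfl | hipos
        · exact le_refl _
        · exact hpair (n-2) (n-2+i) (by omega) (by omega) (by omega)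
      simp only [decide_eq_true_eq, hEq']
      linarith
    have hdlen : (l.drop (n-2)).length = 2 := by rw [List.length_drop, hlen]; omega
    have hsum : List.countP (fun a => decide (0 < a)) l
        = (l.take (n-2)).countP (fun a => decide (0 < a))
          + (l.drop (n-2)).countP (fun a => decide (0 < a)) := by
      conv_lhs => rw [← List.take_append_drop (n-2) l]
      rw [List.countP_append]
    omega

open Matrix

section SpectralHelpers
variable {n : ℕ} {B : Matrix (Fin n) (Fin n) ℝ}

/-- The orthonormal eigenvectors as plain functions. -/
private noncomputable def EV (hB : B.IsHermitian) : Fin n → (Fin n → ℝ) :=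
  fun k => (hB.eigenvectorBasis k : EuclideanSpace ℝ (Fin n))

private lemma EV_mulVec (hB : B.IsHermitian) (k : Fin n) :
    B *ᵥ EV hB k = hB.eigenvalues k • EV hB k :=
  hB.mulVec_eigenvectorBasis k

private lemma EV_dot (hB : B.IsHermitian) (k l : Fin n) :
    EV hB k ⬝ᵥ EV hB l = if k = l then 1 else 0 := by
  have h := orthonormal_iff_ite.1 hB.eigenvectorBasis.orthonormal k l
  rw [PiLp.inner_apply] at h
  simpa [dotProduct, RCLike.inner_apply, conj_trivial, EV, mul_comm] using h

private lemma EV_decomp (hB : B.IsHermitian) (y : Fin n → ℝ) :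
    y = ∑ k, (EV hB k ⬝ᵥ y) • EV hB k := by
  have h0 := congrArg (WithLp.ofLp (p := 2)) (hB.eigenvectorBasis.sum_repr (WithLp.toLp 2 y))
  rw [WithLp.ofLp_sum] at h0
  simp only [WithLp.ofLp_smul, WithLp.ofLp_toLp] at h0
  have h2 : ∀ k, hB.eigenvectorBasis.repr (WithLp.toLp 2 y) k = EV hB k ⬝ᵥ y := by
    intro k
    rw [hB.eigenvectorBasis.repr_apply_apply, PiLp.inner_apply]
    simp [dotProduct, RCLike.inner_apply, conj_trivial, EV, mul_comm]
  conv_lhs => rw [← h0]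
  exact Finset.sum_congr rfl fun k _ => by rw [h2 k]; rfl

private lemma dot_sum' {m : ℕ} (v : Fin n → ℝ) (f : Fin m → Fin n → ℝ) :
    v ⬝ᵥ (∑ k, f k) = ∑ k, v ⬝ᵥ f k := by
  simp only [dotProduct, Finset.sum_apply, Finset.mul_sum]
  exact Finset.sum_comm

private lemma mulVec_sum' {m : ℕ} (f : Fin m → Fin n → ℝ) :
    B *ᵥ (∑ k, f k) = ∑ k, B *ᵥ f k := by
  have := map_sum (Matrix.mulVecLin B) f Finset.univ
  simpa only [Matrix.mulVecLin_apply] using this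

private lemma spec_q (hB : B.IsHermitian) (y : Fin n → ℝ) :
    y ⬝ᵥ B *ᵥ y = ∑ k, hB.eigenvalues k * (EV hB k ⬝ᵥ y) ^ 2 := by
  have hBy : B *ᵥ y = ∑ l, (hB.eigenvalues l * (EV hB l ⬝ᵥ y)) • EV hB l := by
    conv_lhs => rw [EV_decomp hB y]
    rw [mulVec_sum']
    refine Finset.sum_congr rfl fun l _ => ?_
    rw [mulVec_smul, EV_mulVec, smul_smul, mul_comm]
  rw [hBy, dot_sum']
  refine Finset.sum_congr rfl fun k _ => ?_
  rw [dotProduct_smul, smul_eq_mul, dotProduct_comm]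
  ring

private lemma dsum (a b : Fin n → ℝ) :
    ∑ i, ∑ j, B i j * a i * b j = a ⬝ᵥ B *ᵥ b := by
  simp only [dotProduct, Matrix.mulVec, Finset.mul_sum]
  exact Finset.sum_congr rfl fun i _ => Finset.sum_congr rfl fun j _ => by ring

private lemma bq_symm (hsym : ∀ i j, B i j = B j i) (a b : Fin n → ℝ) :
    a ⬝ᵥ B *ᵥ b = b ⬝ᵥ B *ᵥ a := by
  rw [← dsum, ← dsum, Finset.sum_comm]
  exact Finset.sum_congr rfl fun j _ => Finset.sum_congr rfl fun i _ => by
    rw [hsym i j]; ring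

private lemma q_expand (hsym : ∀ i j, B i j = B j i) (x u : Fin n → ℝ) (t : ℝ) :
    (x + t • u) ⬝ᵥ B *ᵥ (x + t • u)
      = x ⬝ᵥ B *ᵥ x + 2 * t * (u ⬝ᵥ B *ᵥ x) + t ^ 2 * (u ⬝ᵥ B *ᵥ u) := by
  rw [mulVec_add, mulVec_smul, dotProduct_add, add_dotProduct, add_dotProduct,
    dotProduct_smul, dotProduct_smul, smul_dotProduct, smul_dotProduct,
    bq_symm hsym x u]
  simp only [smul_eq_mul]
  ring

end SpectralHelpers

private lemma eps_nonneg {p c : ℝ} (h : ∀ ε : ℝ, 0 < ε → 0 ≤ p + ε * c) : 0 ≤ p := by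
  by_contra hp
  push_neg at hp
  rcases le_or_gt c 0 with hc | hc
  · have := h 1 one_pos
    nlinarith
  · have h2 := h (-p / (2 * c)) (div_pos (by linarith) (by linarith))
    have h3 : (-p / (2 * c)) * c = -p / 2 := by field_simp
    rw [h3] at h2
    linarith

theorem stmt16 {n : ℕ} (hn : 2 ≤ n) (B : Matrix (Fin n) (Fin n) ℝ)
    (hB : B.IsHermitian) :
    PosHyperbolic (quadForm B) 2 ↔
      B ≠ 0 ∧ (∀ i j, 0 ≤ B i j) ∧ secondLargest hB.eigenvalues ≤ 0 := by
  classical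
  have hsym : ∀ i j, B i j = B j i := fun i j => by simpa using hB.apply j i
  have heval : ∀ y : Fin n → ℝ, MvPolynomial.eval y (quadForm B) = y ⬝ᵥ B *ᵥ y := by
    intro y
    rw [← dsum]
    simp [quadForm]
  have hcard : ∀ u x : Fin n → ℝ, (lineRestrict (quadForm B) x u).roots.card = 2 ↔
      (u ⬝ᵥ B *ᵥ u ≠ 0 ∧ (u ⬝ᵥ B *ᵥ u) * (x ⬝ᵥ B *ᵥ x) ≤ (u ⬝ᵥ B *ᵥ x) ^ 2) := by
    intro u x
    have hmid : ∑ i, ∑ j, B i j * (x i * u j + u i * x j) = 2 * (u ⬝ᵥ B *ᵥ x) := by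
      have hsplit : ∀ i : Fin n, ∑ j, B i j * (x i * u j + u i * x j)
          = (∑ j, B i j * x i * u j) + ∑ j, B i j * u i * x j := by
        intro i
        rw [← Finset.sum_add_distrib]
        exact Finset.sum_congr rfl fun j _ => by ring
      rw [Finset.sum_congr rfl fun i _ => hsplit i, Finset.sum_add_distrib, dsum, dsum,
        bq_symm hsym x u]
      ring
    rw [lineRestrict_quadForm, hmid, dsum, dsum, roots_quad]
    constructor
    · rintro ⟨h1, h2⟩
      exact ⟨h1, by nlinarith⟩
    · rintro ⟨h1, h2⟩
      exact ⟨h1, by nlinarith⟩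
  have hhom : (quadForm B).IsHomogeneous 2 := by
    apply MvPolynomial.IsHomogeneous.sum
    intro i _
    apply MvPolynomial.IsHomogeneous.sum
    intro j _
    exact ((MvPolynomial.isHomogeneous_C _ _).mul (MvPolynomial.isHomogeneous_X _ _)).mul
      (MvPolynomial.isHomogeneous_X _ _)
  rw [secondLargest_nonpos_iff hn]
  constructor
  · rintro ⟨-, hpos, hroots⟩
    have hqpos : ∀ u : Fin n → ℝ, (∀ i, 0 < u i) → 0 < u ⬝ᵥ B *ᵥ u := by
      intro u hu
      have := hpos u hu
      rwa [heval] at this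
    have hCS : ∀ u : Fin n → ℝ, (∀ i, 0 < u i) →
        ∀ x, (u ⬝ᵥ B *ᵥ u) * (x ⬝ᵥ B *ᵥ x) ≤ (u ⬝ᵥ B *ᵥ x) ^ 2 :=
      fun u hu x => ((hcard u x).1 (hroots u x hu)).2
    have hclaim : ∀ u y : Fin n → ℝ, (∀ i, 0 < u i) → (∀ i, 0 ≤ y i) →
        0 ≤ u ⬝ᵥ B *ᵥ y := by
      intro u y hu hy
      by_contra hlt
      push_neg at hlt
      set β := u ⬝ᵥ B *ᵥ y with hβ
      set A := u ⬝ᵥ B *ᵥ u with hA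
      have hApos : 0 < A := hqpos u hu
      set t := A / (-β) with ht
      have htpos : 0 < t := div_pos hApos (by linarith)
      have hwpos : ∀ i, 0 < (u + t • y) i := by
        intro i
        have h1 : 0 ≤ t * y i := mul_nonneg htpos.le (hy i)
        have h2 := hu i
        simp only [Pi.add_apply, Pi.smul_apply, smul_eq_mul]
        linarith
      have hqw := hqpos _ hwpos
      have hexp : (u + t • y) ⬝ᵥ B *ᵥ (u + t • y)
          = A + 2 * t * (y ⬝ᵥ B *ᵥ u) + t ^ 2 * (y ⬝ᵥ B *ᵥ y) :=
        q_expand hsym u y t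
      have hCSy : A * (y ⬝ᵥ B *ᵥ y) ≤ β ^ 2 := hCS u hu y
      have hyu : y ⬝ᵥ B *ᵥ u = β := bq_symm hsym y u
      rw [hexp, hyu] at hqw
      have htβ : t * β = -A := by
        have hdm : A / -β * -β = A := div_mul_cancel₀ A (by linarith : (-β) ≠ (0:ℝ))
        rw [ht]
        linear_combination -hdm
      have h2 : t ^ 2 * β ^ 2 = A ^ 2 := by
        have : (t * β) ^ 2 = A ^ 2 := by rw [htβ]; ring
        linear_combination this
      have h3 : t ^ 2 * (A * (y ⬝ᵥ B *ᵥ y)) ≤ t ^ 2 * β ^ 2 :=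
        mul_le_mul_of_nonneg_left hCSy (sq_nonneg t)
      have h4 : t ^ 2 * (y ⬝ᵥ B *ᵥ y) ≤ A := by
        have h5 : A * (t ^ 2 * (y ⬝ᵥ B *ᵥ y)) ≤ A * A := by nlinarith
        nlinarith
      nlinarith
    refine ⟨?_, ?_, ?_⟩
    · intro h0
      have h1 := hqpos (fun _ => (1:ℝ)) (fun _ => one_pos)
      subst h0
      simp at h1
    · intro i j
      have key : ∀ ε : ℝ, 0 < ε →
          0 ≤ B i j + ε * ((fun _ => (1:ℝ)) ⬝ᵥ B *ᵥ Pi.single j 1) := by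
        intro ε hε
        have hu : ∀ k, 0 < (Pi.single i 1 + ε • (fun _ => (1:ℝ)) : Fin n → ℝ) k := by
          intro k
          simp only [Pi.add_apply, Pi.smul_apply, smul_eq_mul, mul_one]
          rcases eq_or_ne k i with rfl | hki
          · simp only [Pi.single_eq_same]; linarith
          · simp only [Pi.single_eq_of_ne hki]; linarith
        have h := hclaim _ (Pi.single j 1) hu (fun k => by
          rcases eq_or_ne k j with rfl | hkj
          · simp
          · simp [Pi.single_eq_of_ne hkj])
        have hexp : (Pi.single i 1 + ε • (fun _ => (1:ℝ)) : Fin n → ℝ) ⬝ᵥ B *ᵥ Pi.single j 1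
            = B i j + ε * ((fun _ => (1:ℝ)) ⬝ᵥ B *ᵥ Pi.single j 1) := by
          rw [add_dotProduct, smul_dotProduct]
          rw [mulVec_single_one]
          simp only [smul_eq_mul, single_dotProduct, one_mul, mul_one, Matrix.col_apply]
        rwa [hexp] at h
      exact eps_nonneg key
    · by_contra hcon
      push_neg at hcon
      obtain ⟨k₁, hk₁ne, hk₁⟩ := hcon ⟨0, by omega⟩
      obtain ⟨k₂, hk₂ne, hk₂⟩ := hcon k₁
      have hupos : ∀ i : Fin n, (0:ℝ) < (fun _ => (1:ℝ)) i := fun _ => one_pos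
      set u : Fin n → ℝ := fun _ => (1:ℝ) with hu
      set α := u ⬝ᵥ B *ᵥ EV hB k₂ with hα
      set γ := u ⬝ᵥ B *ᵥ EV hB k₁ with hγ
      obtain ⟨a, b, hab, hperp⟩ : ∃ a b : ℝ, ¬(a = 0 ∧ b = 0) ∧ a * α + b * γ = 0 := by
        rcases eq_or_ne α 0 with hα0 | hα0
        · exact ⟨1, 0, by simp, by rw [hα0]; ring⟩
        · exact ⟨γ, -α, fun h => hα0 (by simpa using h.2), by ring⟩
      set z : Fin n → ℝ := a • EV hB k₂ + b • EV hB k₁ with hz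
      have hbz : u ⬝ᵥ B *ᵥ z = 0 := by
        rw [hz, mulVec_add, mulVec_smul, mulVec_smul, dotProduct_add, dotProduct_smul,
          dotProduct_smul, smul_eq_mul, smul_eq_mul, ← hα, ← hγ]
        exact hperp
      have hdotz : ∀ m, EV hB m ⬝ᵥ z
          = a * (if m = k₂ then 1 else 0) + b * (if m = k₁ then 1 else 0) := by
        intro m
        rw [hz, dotProduct_add, dotProduct_smul, dotProduct_smul, EV_dot, EV_dot,
          smul_eq_mul, smul_eq_mul]
      have hqz : z ⬝ᵥ B *ᵥ z = hB.eigenvalues k₂ * a ^ 2 + hB.eigenvalues k₁ * b ^ 2 := by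
        rw [spec_q hB z]
        have hterm : ∀ m : Fin n, hB.eigenvalues m * (EV hB m ⬝ᵥ z) ^ 2
            = (if m = k₂ then hB.eigenvalues k₂ * a ^ 2 else 0)
              + (if m = k₁ then hB.eigenvalues k₁ * b ^ 2 else 0) := by
          intro m
          rw [hdotz m]
          rcases eq_or_ne m k₂ with rfl | hm2
          · have hne : m ≠ k₁ := hk₂ne
            simp [hne]
          · rcases eq_or_ne m k₁ with rfl | hm1
            · simp [hm2]
            · simp [hm2, hm1]
        rw [Finset.sum_congr rfl fun m _ => hterm m, Finset.sum_add_distrib,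
          Finset.sum_ite_eq' Finset.univ k₂, Finset.sum_ite_eq' Finset.univ k₁]
        simp
      have hqzpos : 0 < z ⬝ᵥ B *ᵥ z := by
        rw [hqz]
        rcases Classical.em (a = 0) with ha0 | ha0
        · have hb0 : b ≠ 0 := fun hb0 => hab ⟨ha0, hb0⟩
          have hb2 : 0 < b ^ 2 := lt_of_le_of_ne (sq_nonneg b) (Ne.symm (pow_ne_zero 2 hb0))
          nlinarith [sq_nonneg a, mul_nonneg (le_of_lt hk₂) (sq_nonneg a)]
        · have ha2 : 0 < a ^ 2 := lt_of_le_of_ne (sq_nonneg a) (Ne.symm (pow_ne_zero 2 ha0))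
          nlinarith [sq_nonneg b, mul_nonneg (le_of_lt hk₁) (sq_nonneg b)]
      have hfin := hCS u hupos z
      rw [hbz] at hfin
      nlinarith [hqpos u hupos, hqzpos]
  · rintro ⟨hB0, hnn, k₀, hk₀⟩
    have hqpos : ∀ u : Fin n → ℝ, (∀ i, 0 < u i) → 0 < u ⬝ᵥ B *ᵥ u := by
      intro u hu
      obtain ⟨i₀, j₀, hij⟩ : ∃ i j, B i j ≠ 0 := by
        by_contra hc
        push_neg at hc
        exact hB0 (by ext i j; exact hc i j)
      have hij' : 0 < B i₀ j₀ := lt_of_le_of_ne (hnn i₀ j₀) (Ne.symm hij)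
      rw [← dsum]
      apply Finset.sum_pos' (fun i _ => Finset.sum_nonneg fun j _ =>
        mul_nonneg (mul_nonneg (hnn i j) (hu i).le) (hu j).le)
      refine ⟨i₀, Finset.mem_univ _, ?_⟩
      apply Finset.sum_pos' (fun j _ =>
        mul_nonneg (mul_nonneg (hnn i₀ j) (hu i₀).le) (hu j).le)
      exact ⟨j₀, Finset.mem_univ _, mul_pos (mul_pos hij' (hu i₀)) (hu j₀)⟩
    refine ⟨hhom, ?_, ?_⟩
    · intro x hx
      rw [heval]
      exact hqpos x hx
    · intro u x hu
      rw [hcard]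
      have hqu := hqpos u hu
      refine ⟨ne_of_gt hqu, ?_⟩
      have hqu' : u ⬝ᵥ B *ᵥ u = ∑ k, hB.eigenvalues k * (EV hB k ⬝ᵥ u) ^ 2 := spec_q hB u
      have hk₀pos : 0 < hB.eigenvalues k₀ * (EV hB k₀ ⬝ᵥ u) ^ 2 := by
        by_contra hc
        push_neg at hc
        have hle : u ⬝ᵥ B *ᵥ u ≤ 0 := by
          rw [hqu']
          calc ∑ k, hB.eigenvalues k * (EV hB k ⬝ᵥ u) ^ 2
              ≤ ∑ _k : Fin n, (0:ℝ) := by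
                apply Finset.sum_le_sum
                intro k _
                rcases eq_or_ne k k₀ with rfl | hk
                · exact hc
                · exact mul_nonpos_of_nonpos_of_nonneg (hk₀ k hk) (sq_nonneg _)
            _ = 0 := by simp
        linarith
      have hd0 : EV hB k₀ ⬝ᵥ u ≠ 0 := by
        intro h0
        rw [h0] at hk₀pos
        simp at hk₀pos
      set t := -(EV hB k₀ ⬝ᵥ x) / (EV hB k₀ ⬝ᵥ u) with ht
      have hzero : EV hB k₀ ⬝ᵥ (x + t • u) = 0 := by
        rw [dotProduct_add, dotProduct_smul, smul_eq_mul, ht]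
        field_simp
        ring
      have hqy : (x + t • u) ⬝ᵥ B *ᵥ (x + t • u) ≤ 0 := by
        rw [spec_q hB (x + t • u)]
        calc ∑ k, hB.eigenvalues k * (EV hB k ⬝ᵥ (x + t • u)) ^ 2
            ≤ ∑ _k : Fin n, (0:ℝ) := by
              apply Finset.sum_le_sum
              intro k _
              rcases eq_or_ne k k₀ with rfl | hk
              · rw [hzero]; simp
              · exact mul_nonpos_of_nonpos_of_nonneg (hk₀ k hk) (sq_nonneg _)
          _ = 0 := by simp
      have hexp : (x + t • u) ⬝ᵥ B *ᵥ (x + t • u)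
          = x ⬝ᵥ B *ᵥ x + 2 * t * (u ⬝ᵥ B *ᵥ x) + t ^ 2 * (u ⬝ᵥ B *ᵥ u) :=
        q_expand hsym x u t
      rw [hexp] at hqy
      nlinarith [sq_nonneg (t * (u ⬝ᵥ B *ᵥ u) + u ⬝ᵥ B *ᵥ x), hqu]
end
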